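/- arXiv:2508.08621 — 10 statements merged into one kernel-verified Lean document; each statement's English description precedes it below -/
import Mathlib

section
/- For all positive integers $M, N$ with $1 \le M \le N-1$, there exists a positive integer $k$ such that $\gcd(M + k(N-1),\, N^2-1)$ divides $N-1$. -/
/-- For `1 ≤ M ≤ N - 1`, there is a positive integer `k` such that
`gcd(M + k(N-1), N^2 - 1)` divides `N - 1`. -/
theorem exists_k_gcd_dvd (M N : ℕ) (h1 : 1 ≤ M) (h2 : M ≤ N - 1) :
    ∃ k : ℕ, 0 < k ∧ Nat.gcd (M + k * (N - 1)) (N ^ 2 - 1) ∣ (N - 1) := by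
  have hN1 : 1 ≤ N - 1 := le_trans h1 h2
  set g := Nat.gcd M (N - 1) with hg
  have hgpos : 0 < g := Nat.gcd_pos_of_pos_left _ h1
  set m := M / g with hm
  set n := (N - 1) / g with hn
  have hgM : g ∣ M := Nat.gcd_dvd_left _ _
  have hgN : g ∣ (N - 1) := Nat.gcd_dvd_right _ _
  have hMgm : M = g * m := (Nat.mul_div_cancel' hgM).symm
  have hNgn : N - 1 = g * n := (Nat.mul_div_cancel' hgN).symm
  have hnpos : 0 < n := by
    rcases Nat.eq_zero_or_pos n with h | h
    · rw [h, mul_zero] at hNgn; omega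
    · exact h
  haveI : NeZero n := ⟨hnpos.ne'⟩
  have hcop : Nat.Coprime m n := Nat.coprime_div_gcd_div_gcd hgpos
  have hunit : IsUnit ((m : ZMod n)) := by
    rw [ZMod.isUnit_iff_coprime]; exact hcop
  obtain ⟨p, hpgt, hpprime, hpmod⟩ :=
    Nat.forall_exists_prime_gt_and_eq_mod hunit (max (N ^ 2 - 1) M)
  have hpM : M < p := lt_of_le_of_lt (le_max_right _ _) hpgt
  have hpL : N ^ 2 - 1 < p := lt_of_le_of_lt (le_max_left _ _) hpgt
  have hmle : m ≤ M := Nat.div_le_self _ _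
  have hmodeq : p ≡ m [MOD n] := (ZMod.natCast_eq_natCast_iff _ _ _).mp hpmod
  have hdvd : n ∣ p - m := (Nat.modEq_iff_dvd' (le_trans hmle hpM.le)).mp hmodeq.symm
  obtain ⟨k, hk⟩ := hdvd
  have hpk : p = m + k * n := by rw [mul_comm] at hk; omega
  have hkpos : 0 < k := by
    rcases Nat.eq_zero_or_pos k with h | h
    · subst h; simp at hpk; omega
    · exact h
  refine ⟨k, hkpos, ?_⟩
  have hA : M + k * (N - 1) = g * p := by
    rw [hMgm, hNgn, hpk]; ring
  have hLpos : 0 < N ^ 2 - 1 := by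
    have h2N : 2 ≤ N := by omega
    have h4 : 4 ≤ N ^ 2 := by nlinarith
    omega
  have hcop2 : Nat.Coprime p (N ^ 2 - 1) := by
    refine (Nat.Prime.coprime_iff_not_dvd hpprime).mpr (fun hdv => ?_)
    exact absurd (Nat.le_of_dvd hLpos hdv) (not_le.mpr hpL)
  rw [hA, Nat.Coprime.gcd_mul_right_cancel g hcop2]
  exact dvd_trans (Nat.gcd_dvd_left g _) hgN
end

section
/- Let $q$ be a power of an odd prime and let $\alpha \in \mathbb{F}_q$ be a square in $\mathbb{F}_q$. Then for every $\beta \in \mathbb{F}_q^\times$ there exists $u \in \mathbb{F}_{q^2}$ with $u \ne 0$ such that $u^2 + \alpha u^{-2} = \beta$. -/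
lemma isSquare_algebraMap_of_card_sq (F K : Type*) [Field F] [Fintype F] [Field K]
    [Fintype K] [Algebra F K] (hodd : Odd (Fintype.card F))
    (hcard : Fintype.card K = Fintype.card F ^ 2) (a : F) :
    IsSquare (algebraMap F K a) := by
  rcases eq_or_ne a 0 with rfl | ha
  · exact ⟨0, by simp⟩
  obtain ⟨k, hk⟩ := hodd
  have hoddK : Odd (Fintype.card K) := by
    rw [hcard, sq]; exact (Nat.odd_mul).mpr ⟨⟨k, hk⟩, ⟨k, hk⟩⟩
  have hchar : ringChar K ≠ 2 := by
    intro h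
    have h2 := FiniteField.even_card_iff_char_two.mp h
    obtain ⟨m, hm⟩ := hoddK
    omega
  have ha' : algebraMap F K a ≠ 0 := (map_ne_zero _).mpr ha
  rw [FiniteField.isSquare_iff hchar ha']
  have hE : Fintype.card K / 2 = (Fintype.card F - 1) * (k + 1) := by
    have h1 : Fintype.card K = (2 * k + 1) ^ 2 := by rw [hcard, hk]
    have h2 : (2 * k + 1) ^ 2 = 2 * (2 * k * (k + 1)) + 1 := by ring
    have h3 : Fintype.card K / 2 = 2 * k * (k + 1) := by omega
    rw [h3, hk]
    have h5 : 2 * k + 1 - 1 = 2 * k := by omega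
    rw [h5]
  rw [hE, pow_mul, ← map_pow, FiniteField.pow_card_sub_one_eq_one a ha]
  simp

/-- Over a finite field of odd order, if `α` is a square then every nonzero `β`
can be written as `u^2 + α u⁻²` for some nonzero `u` in the quadratic extension. -/
theorem exists_u_sq_add (F K : Type*) [Field F] [Fintype F] [Field K] [Fintype K]
    [Algebra F K] (hodd : Odd (Fintype.card F))
    (hcard : Fintype.card K = Fintype.card F ^ 2)
    (α : F) (hα : IsSquare α) (β : F) (hβ : β ≠ 0) :
    ∃ u : K, u ≠ 0 ∧ u ^ 2 + algebraMap F K α * (u ^ 2)⁻¹ = algebraMap F K β := by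
  obtain ⟨γ, hγ⟩ := hα
  have hoddK : Odd (Fintype.card K) := by
    obtain ⟨k, hk⟩ := hodd
    rw [hcard, sq]; exact (Nat.odd_mul).mpr ⟨⟨k, hk⟩, ⟨k, hk⟩⟩
  have hchar : ringChar K ≠ 2 := by
    intro h
    have h2 := FiniteField.even_card_iff_char_two.mp h
    obtain ⟨m, hm⟩ := hoddK
    omega
  have h2K : (2 : K) ≠ 0 := Ring.two_ne_zero hchar
  have hβ' : algebraMap F K β ≠ 0 := (map_ne_zero _).mpr hβ
  rcases eq_or_ne γ 0 with rfl | hγ0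
  · -- α = 0
    obtain ⟨u, hu⟩ := isSquare_algebraMap_of_card_sq F K hodd hcard β
    have hune : u ≠ 0 := by rintro rfl; rw [mul_zero] at hu; exact hβ' hu
    refine ⟨u, hune, ?_⟩
    rw [hγ]
    simp only [mul_zero, map_zero, zero_mul, add_zero, sq, ← hu]
  · obtain ⟨w, hw⟩ := isSquare_algebraMap_of_card_sq F K hodd hcard (β - 2 * γ)
    obtain ⟨s, hs⟩ := isSquare_algebraMap_of_card_sq F K hodd hcard (β + 2 * γ)
    set γ' := algebraMap F K γ with hγ'def
    clear_value γ'
    have hγ'0 : γ' ≠ 0 := by rw [hγ'def]; exact (map_ne_zero _).mpr hγ0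
    have h4 : s * s - w * w = 4 * γ' := by
      rw [← hs, ← hw, ← map_sub]
      have h : β + 2 * γ - (β - 2 * γ) = 4 * γ := by ring
      rw [h, map_mul, map_ofNat, hγ'def]
    have hβ'' : algebraMap F K β = w * w + 2 * γ' := by
      have h : algebraMap F K (β - 2 * γ) = algebraMap F K β - 2 * γ' := by
        rw [map_sub, map_mul, map_ofNat, hγ'def]
      linear_combination hw - h
    set u : K := (w + s) / 2 with hudef
    clear_value u
    have h4K : (4 : K) ≠ 0 := by
      have : (4 : K) = 2 * 2 := by norm_num
      rw [this]; exact mul_ne_zero h2K h2K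
    have hune : u ≠ 0 := by
      intro h0
      rw [hudef, div_eq_zero_iff] at h0
      rcases h0 with h0 | h0
      · have hws : s = -w := by linear_combination h0
        rw [hws] at h4
        have hz : (4 : K) * γ' = 0 := by linear_combination -h4
        exact hγ'0 ((mul_eq_zero.mp hz).resolve_left h4K)
      · exact h2K h0
    have key : u ^ 2 = w * u + γ' := by
      rw [hudef]; field_simp; linear_combination h4
    refine ⟨u, hune, ?_⟩
    have hu2 : u ^ 2 ≠ 0 := pow_ne_zero _ hune
    have hαγ : algebraMap F K α = γ' * γ' := by rw [hγ, map_mul, hγ'def]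
    rw [hαγ]
    have expand : (u ^ 2 + γ' * γ' * (u ^ 2)⁻¹) * u ^ 2 = u ^ 2 * u ^ 2 + γ' * γ' := by
      field_simp
    have main : u ^ 2 * u ^ 2 + γ' * γ' = algebraMap F K β * u ^ 2 := by
      linear_combination (u ^ 2 + w * u - γ') * key - u ^ 2 * hβ''
    have := expand.trans main
    exact mul_right_cancel₀ hu2 this
end

section
/- Let $q$ be a prime power and $\gamma \in \mathbb{F}_q^\times$. For $u \in \mathbb{F}_{q^2}^\times$, we have $u + \gamma/u \in \mathbb{F}_q$ if and only if $u^{q+1} = \gamma$ or $u \in \mathbb{F}_q^\times$. -/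
open Polynomial

/-- In a finite extension, `x` lies in the image of `F` iff `x ^ |F| = x`. -/
lemma mem_range_iff_pow_card (F K : Type*) [Field F] [Fintype F] [Field K] [Fintype K]
    [Algebra F K] (x : K) :
    x ∈ Set.range (algebraMap F K) ↔ x ^ Fintype.card F = x := by
  classical
  set q := Fintype.card F with hq
  have hq1 : 1 < q := Fintype.one_lt_card
  constructor
  · rintro ⟨a, rfl⟩
    rw [← map_pow, FiniteField.pow_card]
  · intro hx
    have hf : (X ^ q - X : K[X]) ≠ 0 := FiniteField.X_pow_card_sub_X_ne_zero K hq1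
    have hdeg : (X ^ q - X : K[X]).natDegree = q :=
      FiniteField.X_pow_card_sub_X_natDegree_eq K hq1
    set T : Finset K := Finset.univ.image (algebraMap F K) with hT
    have hTcard : T.card = q := by
      rw [hT, Finset.card_image_of_injective _ (algebraMap F K).injective,
        Finset.card_univ]
    have hsub : T ⊆ (X ^ q - X : K[X]).roots.toFinset := by
      intro y hy
      simp only [hT, Finset.mem_image] at hy
      obtain ⟨a, -, rfl⟩ := hy
      rw [Multiset.mem_toFinset, mem_roots hf]
      simp [hq, ← map_pow, FiniteField.pow_card]
    have hle : (X ^ q - X : K[X]).roots.toFinset.card ≤ q := by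
      calc (X ^ q - X : K[X]).roots.toFinset.card
          ≤ Multiset.card (X ^ q - X : K[X]).roots := Multiset.toFinset_card_le _
        _ ≤ (X ^ q - X : K[X]).natDegree := Polynomial.card_roots' _
        _ = q := hdeg
    have hTeq : T = (X ^ q - X : K[X]).roots.toFinset :=
      Finset.eq_of_subset_of_card_le hsub (hTcard ▸ hle)
    have hxmem : x ∈ T := by
      rw [hTeq, Multiset.mem_toFinset, mem_roots hf]
      simp [hx]
    simp only [hT, Finset.mem_image] at hxmem
    obtain ⟨a, -, rfl⟩ := hxmem
    exact ⟨a, rfl⟩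

/-- For `γ ∈ 𝔽_q^×` and nonzero `u` in the quadratic extension `K` of `F = 𝔽_q`,
`u + γ/u` lies in `F` iff `u^(q+1) = γ` or `u` lies in `F`. -/
theorem mem_T_iff (F K : Type*) [Field F] [Fintype F] [Field K] [Fintype K]
    [Algebra F K] (hcard : Fintype.card K = Fintype.card F ^ 2)
    (γ : F) (hγ : γ ≠ 0) (u : K) (hu : u ≠ 0) :
    (u + algebraMap F K γ / u ∈ Set.range (algebraMap F K)) ↔
      (u ^ (Fintype.card F + 1) = algebraMap F K γ ∨
        u ∈ Set.range (algebraMap F K)) := by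
  set q := Fintype.card F with hq
  set c : K := algebraMap F K γ with hc
  have hc0 : c ≠ 0 := by
    simp only [hc, ne_eq, _root_.map_eq_zero]
    exact hγ
  obtain ⟨p, hp⟩ := CharP.exists F
  haveI : CharP F p := hp
  obtain ⟨n, hprime, hcardF⟩ := FiniteField.card F p
  haveI : Fact p.Prime := ⟨hprime⟩
  haveI : CharP K p := charP_of_injective_algebraMap (algebraMap F K).injective p
  have hqn : q = p ^ (n : ℕ) := hcardF
  have hcq : c ^ q = c := by
    rw [hc, ← map_pow, FiniteField.pow_card]
  have huq : u ^ q ≠ 0 := pow_ne_zero _ hu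
  have key : (u + c / u) ^ q = u ^ q + c / u ^ q := by
    rw [hqn, add_pow_char_pow, div_pow, ← hqn, hcq]
  rw [mem_range_iff_pow_card, key, mem_range_iff_pow_card]
  have hfactor : (u ^ q - u) * (u ^ (q + 1) - c) =
      (u ^ q + c / u ^ q - (u + c / u)) * (u ^ q * u) := by
    field_simp
    ring
  constructor
  · intro h
    have h0 : (u ^ q - u) * (u ^ (q + 1) - c) = 0 := by rw [hfactor, h]; ring
    rcases mul_eq_zero.1 h0 with h1 | h1
    · exact Or.inr (sub_eq_zero.1 h1)
    · exact Or.inl (sub_eq_zero.1 h1)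
  · intro h
    have h0 : (u ^ q - u) * (u ^ (q + 1) - c) = 0 := by
      rcases h with h | h
      · rw [h]; ring
      · rw [h]; ring
    have h1 : (u ^ q + c / u ^ q - (u + c / u)) * (u ^ q * u) = 0 := by
      rw [← hfactor]; exact h0
    have h2 := (mul_eq_zero.1 h1).resolve_right (mul_ne_zero huq hu)
    exact sub_eq_zero.1 h2
end

section
/- Let $q$ be a power of an odd prime and $\alpha \in \mathbb{F}_q^\times$. Then in $\mathbb{F}_q[x]$, $x^{q^2+1}\left(D_{q^2-1}(x^{-1},\alpha) - 2\right) = (-4\alpha)^{-1}\left(D_{q^2-1}(x,(16\alpha)^{-1}) - 2\right)$, where the left-hand side denotes the polynomial obtained by the reversal of coefficients. -/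
open Polynomial

private lemma dickson_natDegree_le' {R : Type*} [CommRing R] (a : R) :
    ∀ n, (dickson 1 a n).natDegree ≤ n
  | 0 => by
    rw [dickson_zero]
    norm_num
  | 1 => by rw [dickson_one]; exact natDegree_X_le
  | n + 2 => by
    rw [dickson_add_two]
    refine (natDegree_sub_le _ _).trans (max_le ?_ ?_)
    · refine (natDegree_mul_le).trans ?_
      have h1 := dickson_natDegree_le' a (n + 1)
      have h2 : (X : R[X]).natDegree ≤ 1 := natDegree_X_le
      omega
    · refine (natDegree_mul_le).trans ?_
      have h1 := dickson_natDegree_le' a n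
      have h2 : (C a).natDegree = 0 := natDegree_C a
      omega

private lemma dickson_eval_uv {R : Type*} [CommRing R] {a u v : R} (h : u * v = a) :
    ∀ n, (dickson 1 a n).eval (u + v) = u ^ n + v ^ n
  | 0 => by
    rw [dickson_zero]
    norm_num
  | 1 => by simp
  | n + 2 => by
    have h1 := dickson_eval_uv h (n + 1)
    have h0 := dickson_eval_uv h n
    simp only [dickson_add_two, eval_sub, eval_mul, eval_X, eval_C, h1, h0]
    linear_combination (u ^ n + v ^ n) * h

private lemma key_identity {L : Type*} [Field L] (γ w W : L) (hγ : γ ≠ 0) (h2 : (2:L) ≠ 0)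
    (hw : w ≠ 0) (hw1 : w - 1 ≠ 0) (hw2 : w + 1 ≠ 0)
    (hW : W ≠ 0) (hW1 : W - 1 ≠ 0) (hW2 : W + 1 ≠ 0) :
    ((W^2-1)/(2*γ*W)) * ((w^2-1)/(2*γ*w)) *
      ((γ*(W+1)/(2*(W-1))) / (γ*(w+1)/(2*(w-1)))
        + ((-(γ*(W-1))/(2*(W+1))) / (-(γ*(w-1))/(2*(w+1)))) - 2)
    = (γ^2)⁻¹ * ((W/(2*γ)) / (w/(2*γ)) + (w/(2*γ)) / (W/(2*γ)) - 2) := by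
  have hγ2 : γ^2 ≠ 0 := pow_ne_zero _ hγ
  have hWw : W * w ≠ 0 := mul_ne_zero hW hw
  have hA : (W-1)*(w+1) ≠ 0 := mul_ne_zero hW1 hw2
  have hB : (W+1)*(w-1) ≠ 0 := mul_ne_zero hW2 hw1
  have hAB : ((W-1)*(w+1)) * ((W+1)*(w-1)) ≠ 0 := mul_ne_zero hA hB
  have f1 : (γ*(W+1)/(2*(W-1))) / (γ*(w+1)/(2*(w-1)))
      = (W+1)*(w-1) / ((W-1)*(w+1)) := by
    rw [div_div_div_eq, div_eq_div_iff (by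
      exact mul_ne_zero (mul_ne_zero h2 hW1) (mul_ne_zero hγ hw2)) hA]
    ring
  have f2 : (-(γ*(W-1))/(2*(W+1))) / (-(γ*(w-1))/(2*(w+1)))
      = (W-1)*(w+1) / ((W+1)*(w-1)) := by
    rw [div_div_div_eq, div_eq_div_iff
      (mul_ne_zero (mul_ne_zero h2 hW2) (neg_ne_zero.mpr (mul_ne_zero hγ hw1))) hB]
    ring
  have f3 : (W+1)*(w-1) / ((W-1)*(w+1)) + (W-1)*(w+1) / ((W+1)*(w-1)) - 2
      = (2*(W-w))^2 / (((W-1)*(w+1)) * ((W+1)*(w-1))) := by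
    rw [div_add_div _ _ hA hB, div_sub' hAB, div_eq_div_iff hAB hAB]
    ring
  have e1 : (W/(2*γ)) / (w/(2*γ)) = W/w := by
    rw [div_div_div_eq, div_eq_div_iff (mul_ne_zero (mul_ne_zero h2 hγ) hw) hw]
    ring
  have e2 : (w/(2*γ)) / (W/(2*γ)) = w/W := by
    rw [div_div_div_eq, div_eq_div_iff (mul_ne_zero (mul_ne_zero h2 hγ) hW) hW]
    ring
  have e3 : W/w + w/W - 2 = (W-w)^2/(W*w) := by
    rw [div_add_div _ _ hw hW, div_sub' (mul_ne_zero hw hW),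
      div_eq_div_iff (mul_ne_zero hw hW) hWw]
    ring
  rw [f1, f2, f3, e1, e2, e3]
  rw [div_mul_div_comm, div_mul_div_comm, inv_mul_eq_div, div_div]
  have hd1 : 2 * γ * W * (2 * γ * w) * ((W - 1) * (w + 1) * ((W + 1) * (w - 1))) ≠ 0 :=
    mul_ne_zero (mul_ne_zero (mul_ne_zero (mul_ne_zero h2 hγ) hW)
      (mul_ne_zero (mul_ne_zero h2 hγ) hw)) hAB
  have hd2 : W * w * γ ^ 2 ≠ 0 := mul_ne_zero hWw hγ2
  rw [div_eq_div_iff hd1 hd2]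
  ring

/-- Rotation property of Dickson polynomials: the coefficient-reversal
`x^(q²+1) (D_{q²-1}(x⁻¹, α) - 2)` equals `(-4α)⁻¹ (D_{q²-1}(x, (16α)⁻¹) - 2)`. -/
theorem dickson_reflect (F : Type*) [Field F] [Fintype F]
    (hodd : Odd (Fintype.card F)) (α : F) (hα : α ≠ 0) :
    (dickson 1 α (Fintype.card F ^ 2 - 1) - 2).reflect (Fintype.card F ^ 2 + 1) =
      C (-(4 * α))⁻¹ * (dickson 1 (16 * α)⁻¹ (Fintype.card F ^ 2 - 1) - 2) := by
  classical
  set q := Fintype.card F with hqdef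
  -- characteristic facts
  obtain ⟨p, hcp⟩ := CharP.exists F
  haveI : CharP F p := hcp
  obtain ⟨e, hp, hcard⟩ := FiniteField.card F p
  haveI hpfact : Fact p.Prime := ⟨hp⟩
  have hq1 : 0 < q := Fintype.card_pos
  have hq21' : 0 < q ^ 2 := pow_pos hq1 2
  have hq21 : q ^ 2 - 1 + 1 = q ^ 2 := by omega
  have hp2 : p ≠ 2 := by
    rintro rfl
    obtain ⟨k, hk⟩ := id hodd
    have h2 : (2:ℕ) ∣ 2 ^ (e:ℕ) := dvd_pow_self 2 e.2.ne'
    rw [← hcard] at h2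
    omega
  have h2F : (2 : F) ≠ 0 := by
    intro h
    have h2 : ((2:ℕ) : F) = 0 := by exact_mod_cast h
    have := (CharP.cast_eq_zero_iff F p 2).mp h2
    exact hp2 ((Nat.prime_dvd_prime_iff_eq hp Nat.prime_two).mp this)
  have h16F : (16 : F) ≠ 0 := by
    have : (16 : F) = 2^4 := by norm_num
    rw [this]; exact pow_ne_zero _ h2F
  have hc4 : -(4*α) ≠ 0 := by
    have h4F : (4 : F) ≠ 0 := by
      have : (4 : F) = 2^2 := by norm_num
      rw [this]; exact pow_ne_zero _ h2F
    exact neg_ne_zero.mpr (mul_ne_zero h4F hα)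
  have hc16 : (16*α)⁻¹ ≠ 0 := inv_ne_zero (mul_ne_zero h16F hα)
  -- the algebraic closure
  set K := AlgebraicClosure F with hKdef
  set f : F →+* K := algebraMap F K with hfdef
  have hf : Function.Injective f := f.injective
  haveI : CharP K p := charP_of_injective_algebraMap (algebraMap F K).injective p
  have hfne : ∀ c : F, c ≠ 0 → f c ≠ 0 := fun c hc => by simpa using hc
  -- Frobenius x ↦ x^(q^2) facts
  have hq2p : q ^ 2 = p ^ (2 * (e:ℕ)) := by rw [hqdef, hcard, ← pow_mul, mul_comm]
  have hFadd : ∀ a b : K, (a + b) ^ q ^ 2 = a ^ q ^ 2 + b ^ q ^ 2 := by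
    intro a b; rw [hq2p]; exact add_pow_char_pow (p := p) (n := 2*(e:ℕ)) a b
  have hFsub : ∀ a b : K, (a - b) ^ q ^ 2 = a ^ q ^ 2 - b ^ q ^ 2 := by
    intro a b; rw [hq2p]; exact sub_pow_char_pow (p := p) (n := 2*(e:ℕ)) a b
  have hFc : ∀ c : F, f c ^ q ^ 2 = f c := fun c => by
    rw [← map_pow, FiniteField.pow_card_pow]
  -- arithmetic of q
  obtain ⟨k, hk⟩ := id hodd
  have hsplit : q ^ 2 - 1 = 2 * ((q - 1) * (k + 1)) := by
    refine Nat.sub_eq_of_eq_add ?_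
    rw [hk]
    simp only [Nat.add_sub_cancel]
    ring
  have hevenq2 : Even (q ^ 2 - 1) := by rw [hsplit]; exact even_two_mul _
  have hoddq2 : Odd (q ^ 2) := hodd.pow
  -- square roots of images have trivial (q²-1)-th power
  have hpow1 : ∀ c : F, c ≠ 0 → ∀ δ : K, δ^2 = f c → δ ^ (q^2 - 1) = 1 := by
    intro c hc δ hδ
    have hcq : c ^ (q - 1) = 1 := FiniteField.pow_card_sub_one_eq_one c hc
    rw [hsplit, pow_mul, hδ, ← map_pow, pow_mul, hcq, one_pow, map_one]
  have hsqF : ∀ c : F, c ≠ 0 → ∀ δ : K, δ^2 = f c → δ ^ (q^2) = δ := by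
    intro c hc δ hδ
    calc δ ^ q^2 = δ ^ (q^2 - 1) * δ := by rw [← pow_succ, hq21]
      _ = δ := by rw [hpow1 c hc δ hδ, one_mul]
  have h2K : (2:K) ≠ 0 := by
    have h2f : (2:K) = f 2 := (map_ofNat f 2).symm
    rw [h2f]; exact hfne 2 h2F
  have h2q : (2:K) ^ (q^2) = 2 := by
    have h2f : (2:K) = f 2 := (map_ofNat f 2).symm
    rw [h2f]; exact hFc 2
  -- γ : square root of -(4α)
  obtain ⟨γ, hγdef⟩ := IsAlgClosed.exists_pow_nat_eq (f (-(4*α))) (by norm_num : 0 < 2)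
  have hγne : γ ≠ 0 := by
    intro h
    rw [h] at hγdef
    exact hfne _ hc4 (by simpa using hγdef.symm)
  have hγq : γ ^ (q^2) = γ := hsqF (-(4*α)) hc4 γ hγdef
  have hCeq : f ((-(4*α))⁻¹) = (γ^2)⁻¹ := by rw [map_inv₀, ← hγdef]
  obtain ⟨A, hAdef⟩ : ∃ x : K, x = f α := ⟨_, rfl⟩
  obtain ⟨B, hBdef⟩ : ∃ x : K, x = f ((16*α)⁻¹) := ⟨_, rfl⟩
  have hfa : 4 * A = -(γ^2) := by
    have h := hγdef
    rw [map_neg, map_mul, map_ofNat] at h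
    rw [hAdef]
    linear_combination h
  have hBne : B ≠ 0 := by rw [hBdef]; exact hfne _ hc16
  have hBq : B ^ (q^2) = B := by rw [hBdef]; exact hFc _
  have hB4 : 4*γ^2*B = -1 := by
    have h16ne : (16*α : F) ≠ 0 := mul_ne_zero h16F hα
    have hinv : (16*α) * (16*α)⁻¹ = 1 := mul_inv_cancel₀ h16ne
    have h1 : (16 * A) * B = 1 := by
      calc (16*A)*B = f ((16*α) * (16*α)⁻¹) := by rw [hAdef, hBdef, map_mul, map_mul, map_ofNat]
        _ = 1 := by rw [hinv, map_one]
    linear_combination -h1 + 4*B*hfa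
  -- reduce to the algebraic closure and function extensionality
  apply Polynomial.map_injective f hf
  rw [← reflect_map, Polynomial.map_mul, Polynomial.map_sub, Polynomial.map_sub,
    map_dickson, map_dickson, Polynomial.map_ofNat, Polynomial.map_C]
  rw [← hAdef, ← hBdef, hCeq]
  have hdeg : (dickson 1 A (q^2-1) - 2 : K[X]).natDegree ≤ q^2 - 1 := by
    refine (natDegree_sub_le _ _).trans (max_le (dickson_natDegree_le' _ _) ?_)
    simp
  apply Polynomial.funext
  intro r
  by_cases hr : r = 0
  · -- r = 0
    subst hr
    have hL0 : eval 0 ((dickson 1 A (q^2-1) - 2).reflect (q^2+1)) = 0 := by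
      rw [← coeff_zero_eq_eval_zero, coeff_reflect, revAt_le (Nat.zero_le _), Nat.sub_zero]
      exact coeff_eq_zero_of_natDegree_lt (by omega)
    rw [hL0]
    obtain ⟨δ, hδ⟩ := IsAlgClosed.exists_pow_nat_eq (f (-(16*α)⁻¹)) (by norm_num : 0 < 2)
    have hcneg : -(16*α)⁻¹ ≠ 0 := neg_ne_zero.mpr hc16
    have hδq := hpow1 _ hcneg δ hδ
    have huv : δ * (-δ) = B := by
      rw [mul_neg, ← pow_two, hδ, hBdef, map_neg]
      ring
    have h0 : (0:K) = δ + -δ := by ring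
    rw [eval_mul, eval_C, eval_sub, eval_ofNat, h0, dickson_eval_uv huv,
      hevenq2.neg_pow, hδq]
    ring
  · -- r ≠ 0
    -- the root z of z² - rz + B = 0
    have hPdeg : (X^2 - C r * X + C B : K[X]).degree = 2 := by
      have hform : (X^2 - C r * X + C B : K[X]) = C 1 * X^2 + C (-r) * X + C B := by
        simp only [map_one, one_mul, map_neg]
        ring
      rw [hform, degree_quadratic one_ne_zero]
    obtain ⟨z, hz⟩ := IsAlgClosed.exists_root (X^2 - C r * X + C B : K[X])
      (by rw [hPdeg]; norm_num)
    have hzeq : z^2 - r*z + B = 0 := by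
      have := hz
      simp only [IsRoot, eval_add, eval_sub, eval_mul, eval_pow, eval_X, eval_C] at this
      exact this
    have hzne : z ≠ 0 := by
      intro h
      rw [h] at hzeq
      simp at hzeq
      exact hBne hzeq
    obtain ⟨w, hwdef⟩ : ∃ x : K, x = 2*γ*z := ⟨_, rfl⟩
    have hwne : w ≠ 0 := by rw [hwdef]; exact mul_ne_zero (mul_ne_zero h2K hγne) hzne
    have hw2ne : w^2 ≠ 1 := by
      intro h
      have hz2 : z^2 + B = 0 := by
        have h4γ : (4*γ^2 : K) ≠ 0 := by
          have : (4:K) = 2^2 := by norm_num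
          exact mul_ne_zero (by rw [this]; exact pow_ne_zero _ h2K) (pow_ne_zero _ hγne)
        have hexp : (z^2 + B) * (4*γ^2) = 0 := by
          rw [hwdef] at h
          linear_combination h + hB4
        exact (mul_eq_zero.mp hexp).resolve_right h4γ
      have hrz : r * z = 0 := by linear_combination hz2 - hzeq
      rcases mul_eq_zero.mp hrz with h' | h'
      · exact hr h'
      · exact hzne h'
    have hw1 : w - 1 ≠ 0 := by
      intro h
      exact hw2ne (by rw [sub_eq_zero.mp h]; ring)
    have hw1' : w + 1 ≠ 0 := by
      intro h
      exact hw2ne (by rw [eq_neg_of_add_eq_zero_left h]; ring)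
    -- Frobenius images
    obtain ⟨W, hWdef⟩ : ∃ x : K, x = w ^ (q^2) := ⟨_, rfl⟩
    obtain ⟨Z, hZdef⟩ : ∃ x : K, x = z ^ (q^2) := ⟨_, rfl⟩
    have hWz : W = 2*γ*Z := by
      rw [hWdef, hwdef, mul_pow, mul_pow, h2q, hγq, hZdef]
    have hWne : W ≠ 0 := by rw [hWdef]; exact pow_ne_zero _ hwne
    have hW1sub : (w - 1) ^ (q^2) = W - 1 := by rw [hFsub, one_pow, hWdef]
    have hW1add : (w + 1) ^ (q^2) = W + 1 := by rw [hFadd, one_pow, hWdef]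
    have hW1 : W - 1 ≠ 0 := by rw [← hW1sub]; exact pow_ne_zero _ hw1
    have hW1' : W + 1 ≠ 0 := by rw [← hW1add]; exact pow_ne_zero _ hw1'
    -- the parametrizing elements
    obtain ⟨u, hudef⟩ : ∃ x : K, x = γ*(w+1)/(2*(w-1)) := ⟨_, rfl⟩
    obtain ⟨v, hvdef⟩ : ∃ x : K, x = -(γ*(w-1))/(2*(w+1)) := ⟨_, rfl⟩
    obtain ⟨ζ, hζdef⟩ : ∃ x : K, x = B/z := ⟨_, rfl⟩
    have hune : u ≠ 0 := by
      rw [hudef]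
      exact div_ne_zero (mul_ne_zero hγne hw1') (mul_ne_zero h2K hw1)
    have hvne : v ≠ 0 := by
      rw [hvdef]
      exact div_ne_zero (neg_ne_zero.mpr (mul_ne_zero hγne hw1)) (mul_ne_zero h2K hw1')
    have hζne : ζ ≠ 0 := by rw [hζdef]; exact div_ne_zero hBne hzne
    -- Frobenius of u, v, ζ, r
    have hU : u ^ (q^2) = γ*(W+1)/(2*(W-1)) := by
      rw [hudef, div_pow, mul_pow, mul_pow, hγq, h2q, hW1add, hW1sub]
    have hV : v ^ (q^2) = -(γ*(W-1))/(2*(W+1)) := by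
      rw [hvdef, div_pow, hoddq2.neg_pow, mul_pow, mul_pow, hγq, h2q, hW1add, hW1sub]
    have hζq : ζ ^ (q^2) = B/Z := by
      rw [hζdef, div_pow, hBq, hZdef]
    have hrw : r = (w^2-1)/(2*γ*w) := by
      rw [eq_div_iff (mul_ne_zero (mul_ne_zero h2K hγne) hwne), hwdef]
      linear_combination (-(4*γ^2))*hzeq + hB4
    have hRq : r ^ (q^2) = (W^2-1)/(2*γ*W) := by
      have hww : (w^2)^(q^2) = W^2 := by rw [hWdef, pow_right_comm]
      rw [hrw, div_pow, mul_pow, mul_pow, hFsub]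
      rw [one_pow, hww, h2q, hγq, ← hWdef]
    -- algebraic relations for the Dickson evaluations
    have huvA : u * v = A := by
      rw [hudef, hvdef, div_mul_div_comm,
        div_eq_iff (mul_ne_zero (mul_ne_zero h2K hw1) (mul_ne_zero h2K hw1'))]
      linear_combination (-(w-1))*(w+1)*hfa
    have hKgwz : ∀ x : K, x ≠ 0 → x * (1/x) = 1 := fun x hx => mul_div_cancel₀ (G₀ := K) 1 hx
    have hsum : u + v = r⁻¹ := by
      refine (inv_eq_of_mul_eq_one_right ?_).symm
      rw [hrw, hudef, hvdef]
      field_simp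
      ring
    have hzζB : z * ζ = B := by
      rw [hζdef, mul_div_cancel₀ _ hzne]
    have hzζ : z + ζ = r := by
      rw [hζdef, add_div' _ _ _ hzne, div_eq_iff hzne]
      linear_combination hzeq
    -- power rewrites
    have hupow : u^(q^2-1) = u^(q^2) / u := by
      rw [eq_div_iff hune, ← pow_succ, hq21]
    have hvpow : v^(q^2-1) = v^(q^2) / v := by
      rw [eq_div_iff hvne, ← pow_succ, hq21]
    have hzpow : z^(q^2-1) = Z / z := by
      rw [eq_div_iff hzne, ← pow_succ, hq21, hZdef]
    have hζpow : ζ^(q^2-1) = z / Z := by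
      have hZne : Z ≠ 0 := by rw [hZdef]; exact pow_ne_zero _ hzne
      have h1 : ζ^(q^2-1) = ζ^(q^2) / ζ := by
        rw [eq_div_iff hζne, ← pow_succ, hq21]
      rw [h1, hζq, hζdef, div_div_div_eq, mul_comm Z B, mul_div_mul_left _ _ hBne]
    -- evaluations
    have hEL : eval r⁻¹ (dickson 1 A (q^2-1) - 2 : K[X]) = u^(q^2-1) + v^(q^2-1) - 2 := by
      rw [eval_sub, eval_ofNat, ← hsum, dickson_eval_uv huvA]
    have hER : eval r (dickson 1 B (q^2-1) - 2 : K[X]) = z^(q^2-1) + ζ^(q^2-1) - 2 := by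
      rw [eval_sub, eval_ofNat, ← hzζ, dickson_eval_uv hzζB]
    -- evaluation of the reflection
    haveI : Invertible (r⁻¹ : K) := invertibleOfNonzero (inv_ne_zero hr)
    have hrev := eval₂_reflect_mul_pow (RingHom.id K) r⁻¹ (q^2+1)
      (dickson 1 A (q^2-1) - 2) (hdeg.trans (by omega))
    rw [invOf_eq_inv, inv_inv] at hrev
    have hrev' : eval r ((dickson 1 A (q^2-1) - 2 : K[X]).reflect (q^2+1)) * (r⁻¹)^(q^2+1)
        = eval r⁻¹ (dickson 1 A (q^2-1) - 2 : K[X]) := hrev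
    have hLHS : eval r ((dickson 1 A (q^2-1) - 2 : K[X]).reflect (q^2+1))
        = r^(q^2+1) * (u^(q^2-1) + v^(q^2-1) - 2) := by
      rw [← hEL, ← hrev']
      rw [inv_pow]
      rw [mul_comm (r^(q^2+1)), mul_assoc, inv_mul_cancel₀ (pow_ne_zero _ hr), mul_one]
    rw [hLHS, eval_mul, eval_C, hER]
    have hz2γ : w/(2*γ) = z := by
      rw [hwdef, mul_comm, mul_div_assoc, div_self (mul_ne_zero h2K hγne), mul_one]
    have hZ2γ : W/(2*γ) = Z := by
      rw [hWz, mul_comm, mul_div_assoc, div_self (mul_ne_zero h2K hγne), mul_one]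
    calc r^(q^2+1) * (u^(q^2-1) + v^(q^2-1) - 2)
        = ((W^2-1)/(2*γ*W)) * ((w^2-1)/(2*γ*w)) *
            ((γ*(W+1)/(2*(W-1))) / (γ*(w+1)/(2*(w-1)))
              + ((-(γ*(W-1))/(2*(W+1))) / (-(γ*(w-1))/(2*(w+1)))) - 2) := by
          rw [pow_succ, hupow, hvpow, hU, hV, hRq, hudef, hvdef, hrw]
      _ = (γ^2)⁻¹ * ((W/(2*γ)) / (w/(2*γ)) + (w/(2*γ)) / (W/(2*γ)) - 2) :=
          key_identity γ w W hγne h2K hwne hw1 hw1' hWne hW1 hW1'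
      _ = (γ^2)⁻¹ * (z^(q^2-1) + ζ^(q^2-1) - 2) := by
          rw [hz2γ, hZ2γ, hzpow, hζpow]
end

section
/- Let $q$ be a prime power and $\alpha \in \mathbb{F}_q^\times$. Then $D_{q^2-1}(\beta,\alpha) = 2$ and $D_{q^2}(\beta,\alpha) = \beta$ for all $\beta \in \mathbb{F}_q$; equivalently, $D_{q^2-1}(x,\alpha) \equiv 2$ and $D_{q^2}(x,\alpha) \equiv x$ modulo $x^q - x$ in $\mathbb{F}_q[x]$. -/
open Polynomial

lemma dickson_eval_add_of_mul_eq {R : Type*} [CommRing R] (a u v : R) (h : u * v = a) :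
    ∀ n, (dickson 1 a n).eval (u + v) = u ^ n + v ^ n
  | 0 => by simp [dickson]; norm_num
  | 1 => by simp [dickson]
  | n + 2 => by
    rw [dickson_add_two]
    simp only [eval_sub, eval_mul, eval_X, eval_C,
      dickson_eval_add_of_mul_eq a u v h (n + 1), dickson_eval_add_of_mul_eq a u v h n]
    linear_combination (u ^ n + v ^ n) * h

/-- `D_{q²-1}(β, α) = 2` and `D_{q²}(β, α) = β` for all `β ∈ 𝔽_q`. -/
theorem dickson_eval_card_sq (F : Type*) [Field F] [Fintype F] (α : F) (hα : α ≠ 0)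
    (β : F) :
    (dickson 1 α (Fintype.card F ^ 2 - 1)).eval β = 2 ∧
    (dickson 1 α (Fintype.card F ^ 2)).eval β = β := by
  classical
  set p := ringChar F with hpdef
  haveI hc : CharP F p := ringChar.charP F
  haveI : Fact p.Prime := ⟨CharP.char_is_prime F p⟩
  obtain ⟨m, -, hcard⟩ := FiniteField.card F p
  set K := AlgebraicClosure F
  haveI : CharP K p := charP_of_injective_algebraMap (algebraMap F K).injective p
  haveI : ExpChar K p := .prime Fact.out
  set q : ℕ := Fintype.card F with hqdef
  have hq : q = p ^ (m : ℕ) := hcard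
  have hsubq : ∀ x y : K, (x - y) ^ q = x ^ q - y ^ q := fun x y => by
    rw [hq]; exact sub_pow_char_pow x y _
  set b : K := algebraMap F K β with hb
  set a : K := algebraMap F K α with haK
  have ha : a ≠ 0 := fun h => hα ((_root_.map_eq_zero (algebraMap F K)).mp (haK ▸ h))
  have hbq : b ^ q = b := by
    rw [hb, ← map_pow, FiniteField.pow_card]
  have haq : a ^ q = a := by
    rw [haK, ← map_pow, FiniteField.pow_card]
  -- find a root u of X^2 - bX + a in K
  have hdeg : (C (1 : K) * X ^ 2 + C (-b) * X + C a).degree ≠ 0 := by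
    rw [degree_quadratic one_ne_zero]; decide
  obtain ⟨u, hu⟩ := IsAlgClosed.exists_root _ hdeg
  have hu' : u ^ 2 - b * u + a = 0 := by
    simp only [IsRoot, eval_add, eval_mul, eval_pow, eval_C, eval_X, one_mul] at hu
    linear_combination hu
  set v : K := b - u with hv
  have huv : u * v = a := by rw [hv]; linear_combination -hu'
  have hsum : u + v = b := by rw [hv]; ring
  have hu0 : u ≠ 0 := by
    rintro rfl
    apply ha
    simpa using hu'
  have hv0 : v ≠ 0 := fun h => ha (by rw [← huv, h, mul_zero])
  -- u^q is a root, hence equals u or v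
  have hfac : ∀ w : K, w ^ 2 - b * w + a = (w - u) * (w - v) := fun w => by
    linear_combination w * hsum - huv
  have hroot : (u ^ q) ^ 2 - b * (u ^ q) + a = 0 := by
    have : (u ^ 2 - b * u + a) ^ q = 0 := by rw [hu']; exact zero_pow Fintype.card_pos.ne'
    calc (u ^ q) ^ 2 - b * (u ^ q) + a
        = ((u ^ 2) ^ q - (b * u) ^ q) + a ^ q := by
          rw [haq, mul_pow, hbq, ← pow_mul, ← pow_mul, Nat.mul_comm]
      _ = (u ^ 2 - b * u) ^ q + a ^ q := by rw [hsubq]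
      _ = 0 := by
          rw [haq, ← this]
          have := hsubq (u ^ 2 - b * u + a) a
          have h2 : (u ^ 2 - b * u + a) - a = u ^ 2 - b * u := by ring
          rw [h2] at this
          rw [this, haq]; ring
  have hcase : u ^ q = u ∨ u ^ q = v := by
    have := hfac (u ^ q)
    rw [hroot] at this
    rcases mul_eq_zero.mp this.symm with h | h
    · left; exact sub_eq_zero.mp h
    · right; exact sub_eq_zero.mp h
  have hbqq : b ^ (q * q) = b := by rw [pow_mul, hbq, hbq]
  have huN : u ^ (q * q) = u := by
    rw [pow_mul]
    rcases hcase with h | h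
    · rw [h, h]
    · rw [h, hv, hsubq, hbq, h, hv]; ring
  have hvN : v ^ (q * q) = v := by
    rw [hv, pow_mul, hsubq, hbq, hsubq, hbq, ← pow_mul, huN]
  -- transfer evaluation
  have key : ∀ n : ℕ, algebraMap F K ((dickson 1 α n).eval β) = u ^ n + v ^ n := fun n => by
    rw [← eval₂_hom, ← eval_map, map_dickson, ← haK, ← hb, ← hsum,
      dickson_eval_add_of_mul_eq a u v huv]
  have hN : q ^ 2 = q * q := sq q
  have hinj := (algebraMap F K).injective
  constructor
  · apply hinj
    rw [key, map_ofNat]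
    have h1 : u ^ (q ^ 2 - 1) = 1 := by
      have hx : u ^ (q ^ 2 - 1) * u = 1 * u := by
        rw [← pow_succ, Nat.sub_add_cancel (Nat.one_le_pow _ _ Fintype.card_pos), hN, huN, one_mul]
      exact mul_right_cancel₀ hu0 hx
    have h2 : v ^ (q ^ 2 - 1) = 1 := by
      have hx : v ^ (q ^ 2 - 1) * v = 1 * v := by
        rw [← pow_succ, Nat.sub_add_cancel (Nat.one_le_pow _ _ Fintype.card_pos), hN, hvN, one_mul]
      exact mul_right_cancel₀ hv0 hx
    rw [h1, h2]
    norm_num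
  · apply hinj
    rw [key, hN, huN, hvN, hsum]
end

section
/- Let $q$ be an odd prime power and let $\alpha \in \mathbb{F}_q^\times$ be a square in $\mathbb{F}_q$. Then $D_{\frac{q^2-1}{2}}(\beta,\alpha) = 2$ and $D_{\frac{q^2+1}{2}}(\beta,\alpha) = \beta$ for all $\beta \in \mathbb{F}_q$. -/
open Polynomial

theorem dickson_eval_add_mul' {R : Type*} [CommRing R] (a x y : R) (h : x * y = a) :
    ∀ n, (dickson 1 a n).eval (x + y) = x ^ n + y ^ n
  | 0 => by simp [dickson_zero]; norm_num
  | 1 => by simp [dickson_one]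
  | n + 2 => by
    rw [dickson_add_two]
    simp only [eval_sub, eval_mul, eval_X, eval_C,
      dickson_eval_add_mul' a x y h (n + 1), dickson_eval_add_mul' a x y h n]
    rw [← h]; ring

/-- For odd `q` and square `α ∈ 𝔽_q^×`, `D_{(q²-1)/2}(β, α) = 2` and
`D_{(q²+1)/2}(β, α) = β` for all `β ∈ 𝔽_q`. -/
theorem dickson_eval_half (F : Type*) [Field F] [Fintype F]
    (hodd : Odd (Fintype.card F)) (α : F) (hα : α ≠ 0) (hsq : IsSquare α) (β : F) :
    (dickson 1 α ((Fintype.card F ^ 2 - 1) / 2)).eval β = 2 ∧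
    (dickson 1 α ((Fintype.card F ^ 2 + 1) / 2)).eval β = β := by
  classical
  obtain ⟨γ, hγ⟩ := hsq
  have hγ0 : γ ≠ 0 := by rintro rfl; simp at hγ; exact hα hγ
  set q := Fintype.card F with hq
  obtain ⟨k, hk⟩ := hodd
  have hq2 : q ^ 2 = 4 * k ^ 2 + 4 * k + 1 := by rw [hk]; ring
  set m : ℕ := 2 * k ^ 2 + 2 * k with hm
  have em : (q ^ 2 - 1) / 2 = m := by omega
  have em1 : (q ^ 2 + 1) / 2 = m + 1 := by omega
  have e2 : (q - 1) * (k + 1) = m := by rw [hk, Nat.add_sub_cancel]; ring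
  have e3 : (q + 1) * k = m := by rw [hk]; ring
  have e4 : (q - 1) * (2 * k + 2) = 2 * m := by rw [hk, Nat.add_sub_cancel]; ring
  -- the quadratic extension (inside the algebraic closure)
  set E := AlgebraicClosure F with hE
  set φ := algebraMap F E with hφdef
  have hφ : Function.Injective φ := (algebraMap F E).injective
  -- characteristic
  set p := ringChar F with hp
  haveI : CharP F p := ringChar.charP F
  obtain ⟨n, hpp, hcard⟩ := FiniteField.card F p
  haveI := Fact.mk hpp
  haveI : CharP E p := charP_of_injective_algebraMap hφ p
  haveI : ExpChar E p := ExpChar.prime hpp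
  have hpne2 : p ≠ 2 := by
    intro hp2
    have heq : q = 2 ^ (n : ℕ) := by rw [hq, hcard, hp2]
    have hdvd : 2 ∣ 2 ^ (n : ℕ) := dvd_pow_self 2 n.pos.ne'
    omega
  have h2 : (2 : E) ≠ 0 := by
    intro h
    have hdvd : (p : ℕ) ∣ 2 := (CharP.cast_eq_zero_iff E p 2).mp (by exact_mod_cast h)
    have := hpp.two_le
    have := Nat.le_of_dvd (by norm_num) hdvd
    omega
  -- square root of the discriminant
  obtain ⟨s, hs⟩ := IsAlgClosed.exists_pow_nat_eq (k := E) (φ β ^ 2 - 4 * φ α) zero_lt_two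
  set v : E := (φ β + s) / 2 with hv
  set w : E := (φ β - s) / 2 with hw
  have hvw : v * w = φ α := by rw [hv, hw, div_mul_div_comm, div_eq_iff (mul_ne_zero h2 h2)]; linear_combination -hs
  have hsum : v + w = φ β := by rw [hv, hw, ← add_div, div_eq_iff h2]; ring
  have hαE : φ α ≠ 0 := fun h => hα (hφ (by simpa using h))
  have hv0 : v ≠ 0 := by rintro h; rw [h, zero_mul] at hvw; exact hαE hvw.symm
  have hw0 : w ≠ 0 := by rintro h; rw [h, mul_zero] at hvw; exact hαE hvw.symm
  -- the Frobenius x ↦ x ^ q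
  set ψ : E →+* E := iterateFrobenius E p n with hψdef
  have hψ : ∀ x : E, ψ x = x ^ q := by
    intro x; rw [hψdef, iterateFrobenius_def, hq, hcard]
  have hfix : ∀ x : F, (φ x) ^ q = φ x := by
    intro x; rw [← map_pow, FiniteField.pow_card]
  -- v satisfies the quadratic, hence so does v ^ q
  have hquad : v ^ 2 = φ β * v - φ α := by
    rw [← hsum, ← hvw]; ring
  have hquadq : (v ^ q) ^ 2 = φ β * v ^ q - φ α := by
    have h1 := congrArg ψ hquad
    rw [map_pow, map_sub, map_mul] at h1
    simp only [hψ] at h1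
    rw [hfix β, hfix α] at h1
    exact h1
  have hcases : v ^ q = v ∨ v ^ q = w := by
    have hfac : (v ^ q - v) * (v ^ q - w) = 0 := by
      linear_combination hquadq - v ^ q * hsum + hvw
    rcases mul_eq_zero.mp hfac with h | h
    · exact Or.inl (sub_eq_zero.mp h)
    · exact Or.inr (sub_eq_zero.mp h)
  -- γ facts
  have hγ1 : γ ^ (q - 1) = 1 := FiniteField.pow_card_sub_one_eq_one γ hγ0
  -- v ^ m = 1
  have hvm : v ^ m = 1 := by
    rcases hcases with h | h
    · have hv1 : v ^ (q - 1) = 1 := by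
        have : v ^ (q - 1) * v = v := by
          rw [← pow_succ]
          have : q - 1 + 1 = q := by omega
          rw [this, h]
        exact mul_right_cancel₀ hv0 (by rw [this, one_mul])
      calc v ^ m = (v ^ (q - 1)) ^ (k + 1) := by rw [← pow_mul, e2]
        _ = 1 := by rw [hv1, one_pow]
    · have hv1 : v ^ (q + 1) = φ α := by
        rw [pow_succ, h, mul_comm, hvw]
      calc v ^ m = (v ^ (q + 1)) ^ k := by rw [← pow_mul, e3]
        _ = (φ α) ^ k := by rw [hv1]
        _ = φ (γ ^ (2 * k)) := by rw [hγ, map_mul, map_pow]; ring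
        _ = φ ((γ ^ (q - 1)) ^ 1) := by congr 1; rw [← pow_mul]; congr 1; omega
        _ = 1 := by rw [hγ1]; simp
  have hwm : w ^ m = 1 := by
    have hprod : (v * w) ^ m = 1 := by
      have hg : (γ * γ) ^ m = 1 := by
        have h2m : γ ^ (2 * m) = 1 := by
          rw [← e4, pow_mul, hγ1, one_pow]
        calc (γ * γ) ^ m = γ ^ (2 * m) := by rw [mul_pow, ← pow_add, two_mul]
          _ = 1 := h2m
      rw [hvw, hγ, ← map_pow, hg, map_one]
    rw [mul_pow, hvm, one_mul] at hprod
    exact hprod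
  -- transfer the evaluation to E
  have key : ∀ N : ℕ, φ ((dickson 1 α N).eval β) = v ^ N + w ^ N := by
    intro N
    have h1 : φ ((dickson 1 α N).eval β) = ((dickson 1 α N).map φ).eval (φ β) := by
      rw [eval_map, eval₂_hom]
    rw [h1, map_dickson, ← hsum, dickson_eval_add_mul' (φ α) v w hvw]
  constructor
  · rw [em]
    apply hφ
    rw [key m, hvm, hwm, map_ofNat]
    norm_num
  · rw [em1]
    apply hφ
    rw [key (m + 1), pow_succ, pow_succ, hvm, hwm, one_mul, one_mul, hsum]
end

section
/- Let $q$ be a prime power and $\alpha \in \mathbb{F}_q^\times$, and suppose $n$ is a positive integer such that $D_n(\beta,\alpha) = 2$ for all $\beta \in \mathbb{F}_q$. If $q$ is even then $q^2 - 1$ divides $n$. If $q$ is odd then $\frac{q^2-1}{2}$ divides $n$; and if moreover $\alpha$ is a nonsquare in $\mathbb{F}_q$, then $q^2-1$ divides $n$. -/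
open Polynomial

private lemma dickson_eval_add' {R : Type*} [CommRing R] (a x y : R) (hxy : x * y = a) :
    ∀ n : ℕ, (dickson 1 a n).eval (x + y) = x ^ n + y ^ n
  | 0 => by
    simp only [dickson_zero, pow_zero]
    norm_num
  | 1 => by simp [dickson_one]
  | n + 2 => by
    simp only [dickson_add_two, eval_sub, eval_mul, eval_X, eval_C,
      dickson_eval_add' a x y hxy (n + 1), dickson_eval_add' a x y hxy n]
    subst hxy
    ring

private lemma eq_one_of_add_inv' {K : Type*} [Field K] {v : K} (hv : v ≠ 0)
    (h : v + v⁻¹ = 2) : v = 1 := by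
  have key : (v - 1) ^ 2 = (v + v⁻¹ - 2) * v := by
    field_simp
    ring
  rw [h, sub_self, zero_mul, pow_eq_zero_iff (by norm_num)] at key
  exact sub_eq_zero.mp key

/-- If `D_n(·, α)` is the constant function `2` on `𝔽_q`, then `q²-1 ∣ n` when `q`
is even, `(q²-1)/2 ∣ n` when `q` is odd, and `q²-1 ∣ n` when moreover `α` is a
nonsquare. -/
theorem dickson_const_two_period (F : Type*) [Field F] [Fintype F]
    (α : F) (hα : α ≠ 0) (n : ℕ) (hn : 0 < n)
    (h : ∀ β : F, (dickson 1 α n).eval β = 2) :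
    (Even (Fintype.card F) → (Fintype.card F ^ 2 - 1) ∣ n) ∧
    (Odd (Fintype.card F) →
      ((Fintype.card F ^ 2 - 1) / 2 ∣ n ∧
        (¬ IsSquare α → (Fintype.card F ^ 2 - 1) ∣ n))) := by
  classical
  set q := Fintype.card F with hqdef
  have hq2 : 2 ≤ q := Fintype.one_lt_card
  obtain ⟨p, hpchar⟩ := CharP.exists F
  obtain ⟨k, hp, hcard⟩ := FiniteField.card F p
  rw [← hqdef] at hcard
  haveI hpp : Fact p.Prime := ⟨hp⟩
  set K := AlgebraicClosure F with hKdef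
  set f : F →+* K := algebraMap F K with hfdef
  have hf : Function.Injective f := f.injective
  haveI hKchar : CharP K p := charP_of_injective_ringHom hf p
  -- α ^ n = 1
  have hα1 : α ^ n = 1 := by
    have h1 := h (1 + α)
    rw [dickson_eval_add' α 1 α (one_mul α) n, one_pow] at h1
    linear_combination h1
  -- every nonzero element of F satisfies u ^ n = 1
  have hF1 : ∀ u : F, u ≠ 0 → u ^ n = 1 := by
    intro u hu
    have hx : u * (α * u⁻¹) = α := by field_simp
    have h1 := h (u + α * u⁻¹)
    rw [dickson_eval_add' α u (α * u⁻¹) hx n, mul_pow, hα1, one_mul, inv_pow] at h1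
    exact eq_one_of_add_inv' (pow_ne_zero n hu) h1
  have hdvd1 : q - 1 ∣ n := by
    obtain ⟨g, hg⟩ := IsCyclic.exists_generator (α := Fˣ)
    have hgn : g ^ n = 1 := by
      ext
      rw [Units.val_pow_eq_pow_val, Units.val_one]
      exact hF1 (g : F) g.ne_zero
    have := orderOf_dvd_of_pow_eq_one hgn
    rwa [orderOf_eq_card_of_forall_mem_zpowers hg, Nat.card_eq_fintype_card,
      Fintype.card_units, ← hqdef] at this
  -- the fixed points of x ↦ x ^ q in K are exactly the image of F
  have hfix : ∀ x : K, x ^ q = x → ∃ b : F, f b = x := by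
    intro x hx
    by_contra hc
    push_neg at hc
    set P : K[X] := X ^ q - X with hPdef
    have hdeg : P.natDegree = q := by
      rw [hPdef, natDegree_sub_eq_left_of_natDegree_lt, natDegree_X_pow]
      rw [natDegree_X, natDegree_X_pow]
      omega
    have hP : P ≠ 0 := fun h0 => by simp [h0] at hdeg; omega
    set S : Finset K := insert x (Finset.univ.image f) with hSdef
    have hScard : S.card = q + 1 := by
      rw [hSdef, Finset.card_insert_of_notMem (by
        simp only [Finset.mem_image, Finset.mem_univ, true_and]
        rintro ⟨b, hb⟩
        exact hc b hb), Finset.card_image_of_injective _ hf]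
      rfl
    have hSsub : S ⊆ P.roots.toFinset := by
      intro s hs
      rw [Multiset.mem_toFinset, mem_roots hP]
      rw [hSdef, Finset.mem_insert] at hs
      rcases hs with rfl | hs
      · simp [hPdef, IsRoot, hx]
      · obtain ⟨b, -, rfl⟩ := Finset.mem_image.mp hs
        simp only [hPdef, IsRoot, eval_sub, eval_pow, eval_X]
        rw [← map_pow, hqdef, FiniteField.pow_card, sub_self]
    have hle : S.card ≤ q := by
      calc S.card ≤ P.roots.toFinset.card := Finset.card_le_card hSsub
        _ ≤ Multiset.card P.roots := P.roots.toFinset_card_le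
        _ ≤ P.natDegree := P.card_roots'
        _ = q := hdeg
    omega
  -- frobenius on K
  have hfr : ∀ x y : K, (x + y) ^ q = x ^ q + y ^ q := by
    intro x y
    rw [hcard]
    exact add_pow_char_pow x y p k
  have hq2arith : (q + 1) * (q - 1) + 1 = q * q := by
    zify [show 1 ≤ q by omega]
    ring
  -- every (q+1)-st root of f α has u ^ n = 1
  have hun : ∀ u : K, u ^ (q + 1) = f α → u ^ n = 1 := by
    intro u hu
    have hu0 : u ≠ 0 := by
      intro h0
      rw [h0, zero_pow (by omega)] at hu
      exact hα (hf (by rw [← hu, map_zero]))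
    have h1 : u ^ ((q + 1) * (q - 1)) = 1 := by
      rw [pow_mul, hu, ← map_pow, FiniteField.pow_card_sub_one_eq_one α hα, map_one]
    have huq : u ^ (q * q) = u := by
      calc u ^ (q * q) = u ^ ((q + 1) * (q - 1)) * u := by rw [← pow_succ, hq2arith]
        _ = u := by rw [h1, one_mul]
    have hfixed : (u + u ^ q) ^ q = u + u ^ q := by
      rw [hfr, ← pow_mul, huq, add_comm]
    obtain ⟨b, hb⟩ := hfix (u + u ^ q) hfixed
    have huinv : f α * u⁻¹ = u ^ q := by
      rw [← hu, pow_succ, mul_assoc, mul_inv_cancel₀ hu0, mul_one]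
    have hx : u * (f α * u⁻¹) = f α := by rw [mul_left_comm, mul_inv_cancel₀ hu0, mul_one]
    have hevalK : (dickson 1 (f α) n).eval (f b) = 2 := by
      rw [← map_dickson f n, eval_map, eval₂_at_apply, h b]
      exact map_ofNat f 2
    rw [hb, ← huinv, dickson_eval_add' (f α) u (f α * u⁻¹) hx n, mul_pow,
      ← map_pow, hα1, map_one, one_mul, inv_pow] at hevalK
    exact eq_one_of_add_inv' (pow_ne_zero n hu0) hevalK
  -- a (q+1)-st root of f α and a primitive (q+1)-st root of unity
  obtain ⟨u₀, hu₀⟩ := IsAlgClosed.exists_pow_nat_eq (f α) (n := q + 1) (by omega)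
  haveI hne : NeZero ((q + 1 : ℕ) : K) := by
    constructor
    have hq0 : ((q : ℕ) : K) = 0 := by
      rw [hcard]
      exact_mod_cast (CharP.cast_eq_zero_iff K p (p ^ (k : ℕ))).2
        (dvd_pow_self p (k.pos.ne'))
    push_cast
    rw [hq0, zero_add]
    exact one_ne_zero
  obtain ⟨ζ, hζ⟩ := HasEnoughRootsOfUnity.exists_primitiveRoot K (q + 1)
  have hu0n : u₀ ^ n = 1 := hun u₀ hu₀
  have hζn : ζ ^ n = 1 := by
    have h1 := hun (u₀ * ζ) (by rw [mul_pow, hu₀, hζ.pow_eq_one, mul_one])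
    rw [mul_pow, hu0n, one_mul] at h1
    exact h1
  have hdvd2 : q + 1 ∣ n := hζ.pow_eq_one_iff_dvd n |>.mp hζn
  -- arithmetic
  have hmul : q ^ 2 - 1 = (q - 1) * (q + 1) := by
    zify [show 1 ≤ q by omega, Nat.one_le_pow 2 q (by omega)]
    ring
  have hgcd2 : Nat.gcd (q - 1) (q + 1) ∣ 2 := by
    have := Nat.dvd_sub (Nat.gcd_dvd_right (q - 1) (q + 1)) (Nat.gcd_dvd_left (q - 1) (q + 1))
    simpa [show q + 1 - (q - 1) = 2 by omega] using this
  constructor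
  · intro hev
    have hodd : ¬ (2 ∣ q - 1) := by
      obtain ⟨j, hj⟩ := hev
      omega
    have hcop : Nat.Coprime (q - 1) (q + 1) := by
      rcases (Nat.dvd_prime Nat.prime_two).1 hgcd2 with h1 | h2
      · exact h1
      · exact absurd (h2 ▸ Nat.gcd_dvd_left (q - 1) (q + 1)) hodd
    rw [hmul]
    exact Nat.Coprime.mul_dvd_of_dvd_of_dvd hcop hdvd1 hdvd2
  · intro hodd
    obtain ⟨j, hj⟩ := hodd
    have hg : Nat.gcd (q - 1) (q + 1) = 2 :=
      Nat.dvd_antisymm hgcd2 (Nat.dvd_gcd ⟨j, by omega⟩ ⟨j + 1, by omega⟩)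
    have hlcm : Nat.lcm (q - 1) (q + 1) ∣ n := Nat.lcm_dvd hdvd1 hdvd2
    have hglcm := Nat.gcd_mul_lcm (q - 1) (q + 1)
    rw [hg] at hglcm
    have hhalf : (q ^ 2 - 1) / 2 = Nat.lcm (q - 1) (q + 1) := by omega
    have hdvdhalf : (q ^ 2 - 1) / 2 ∣ n := hhalf ▸ hlcm
    refine ⟨hdvdhalf, ?_⟩
    intro hns
    by_contra hndvd
    obtain ⟨m, hm⟩ := hdvdhalf
    have hq2e : 2 ∣ q ^ 2 - 1 := by
      obtain ⟨t, ht⟩ := (show Odd q from ⟨j, by omega⟩).pow (n := 2)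
      omega
    obtain ⟨i, hi⟩ : ∃ i, m = 2 * i + 1 := by
      rcases Nat.even_or_odd m with ⟨i, rfl⟩ | ⟨i, rfl⟩
      · refine absurd ⟨i, ?_⟩ hndvd
        rw [hm, show (q ^ 2 - 1) / 2 * (i + i) = (q ^ 2 - 1) / 2 * 2 * i by ring,
          Nat.div_mul_cancel hq2e]
      · exact ⟨i, rfl⟩
    have ht2 : u₀ ^ ((q ^ 2 - 1) / 2) * u₀ ^ ((q ^ 2 - 1) / 2) = 1 := by
      have hmul' : (q + 1) * (q - 1) = q ^ 2 - 1 := (mul_comm _ _).trans hmul.symm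
      rw [← pow_add, show (q ^ 2 - 1) / 2 + (q ^ 2 - 1) / 2 = (q + 1) * (q - 1) by omega,
        pow_mul, hu₀, ← map_pow, hqdef, FiniteField.pow_card_sub_one_eq_one α hα,
        map_one]
    have ht1 : u₀ ^ ((q ^ 2 - 1) / 2) = 1 := by
      have : u₀ ^ n = u₀ ^ ((q ^ 2 - 1) / 2) := by
        rw [hm, pow_mul, hi, pow_succ, pow_mul, pow_two, ht2, one_pow, one_mul]
      rw [← this, hu0n]
    have hhalfq : (q + 1) * ((q - 1) / 2) = (q ^ 2 - 1) / 2 := by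
      have h1 : q ^ 2 - 1 = 2 * ((q + 1) * j) := by
        rw [hmul, show q - 1 = 2 * j by omega]
        ring
      rw [h1, Nat.mul_div_cancel_left _ (by norm_num : 0 < 2),
        show (q - 1) / 2 = j by omega]
    have hαsq : α ^ ((q - 1) / 2) = 1 := by
      apply hf
      rw [map_pow, map_one, ← hu₀, ← pow_mul, hhalfq, ht1]
    have hchar2 : ringChar F ≠ 2 := by
      intro h2
      have hc2 := FiniteField.even_card_of_char_two h2
      rw [← hqdef] at hc2
      omega
    refine hns ((FiniteField.isSquare_iff hchar2 hα).2 ?_)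
    rw [show Fintype.card F / 2 = (q - 1) / 2 by rw [← hqdef]; omega]
    exact hαsq
end

section
/- Let $q$ be a prime power and $\alpha \in \mathbb{F}_q^\times$. The least period of the sequence of functions $n \mapsto (D_n(\cdot,\alpha)\colon \mathbb{F}_q \to \mathbb{F}_q)$ is exactly $\frac{q^2-1}{2}$ if $q$ is odd and $\alpha$ is a square in $\mathbb{F}_q$, and is exactly $q^2-1$ otherwise. -/
open Polynomial

set_option linter.unusedSectionVars false
set_option linter.unusedVariables false

lemma dickson_eval_pair {R : Type*} [CommRing R] (y z : R) :
    ∀ n : ℕ, (dickson 1 (y * z) n).eval (y + z) = y ^ n + z ^ n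
  | 0 => by simp [dickson_zero]; norm_num
  | 1 => by simp [dickson_one]
  | (n + 2) => by
      rw [dickson_add_two]
      simp only [eval_sub, eval_mul, eval_X, eval_C,
        dickson_eval_pair y z (n+1), dickson_eval_pair y z n]
      ring

lemma period_key {F R : Type*} [Field F] [CommRing R] (i : F →+* R) {α : F} {k : ℕ}
    (hk : ∀ n : ℕ, ∀ β : F, (dickson 1 α (n + k)).eval β = (dickson 1 α n).eval β)
    {y z : R} (hyz : y * z = i α) {β : F} (hβ : y + z = i β) (n : ℕ) :
    y ^ (n + k) + z ^ (n + k) = y ^ n + z ^ n := by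
  have h1 : ∀ m : ℕ, i ((dickson 1 α m).eval β) = y ^ m + z ^ m := by
    intro m
    have := dickson_eval_pair y z m
    rw [hyz, hβ] at this
    rw [← this, ← eval₂_at_apply, ← eval_map, map_dickson]
  have := congrArg i (hk n β)
  rw [h1, h1] at this
  exact this

lemma period_pow_eq_one {F R : Type*} [Field F] [CommRing R] [IsDomain R] (i : F →+* R)
    {α : F} {k : ℕ}
    (hk : ∀ n : ℕ, ∀ β : F, (dickson 1 α (n + k)).eval β = (dickson 1 α n).eval β)
    {y z : R} (hyz : y * z = i α) {β : F} (hβ : y + z = i β) (hne : y ≠ z) :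
    y ^ k = 1 := by
  have h0 := period_key i hk hyz hβ 0
  have h1 := period_key i hk hyz hβ 1
  simp only [zero_add, pow_zero, pow_one] at h0 h1
  rw [pow_add, pow_add, pow_one] at h1
  have hzero : (y ^ k - 1) * (y - z) = 0 := by linear_combination h1 - z * h0
  rcases mul_eq_zero.mp hzero with h | h
  · exact sub_eq_zero.mp h
  · exact absurd (sub_eq_zero.mp h) hne

section Step1
variable {F : Type*} [Field F] [Fintype F] {α : F} {k : ℕ}

lemma step1_ne (hα : α ≠ 0)
    (hk : ∀ n : ℕ, ∀ β : F, (dickson 1 α (n + k)).eval β = (dickson 1 α n).eval β)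
    {x : F} (hx : x ≠ 0) (hxx : x * x ≠ α) : x ^ k = 1 := by
  have hinv : x * (α * x⁻¹) = α := by field_simp
  have hne : x ≠ α * x⁻¹ := by
    intro h
    apply hxx
    calc x * x = x * (α * x⁻¹) := by rw [← h]
    _ = α := hinv
  exact period_pow_eq_one (RingHom.id F)
    (by simpa using hk) (by simpa using hinv) (β := x + α * x⁻¹) (by simp) hne

lemma step1 (hα : α ≠ 0)
    (hk : ∀ n : ℕ, ∀ β : F, (dickson 1 α (n + k)).eval β = (dickson 1 α n).eval β)
    {x : F} (hx : x ≠ 0) : x ^ k = 1 := by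
  by_cases hxx : x * x ≠ α
  · exact step1_ne hα hk hx hxx
  push_neg at hxx
  by_cases h2 : (2 : F) ≠ 0
  · -- double root case, char ≠ 2
    have h0 := period_key (RingHom.id F) (by simpa using hk) (y := x) (z := x)
      (by simpa using hxx) (β := x + x) (by simp) 0
    simp only [zero_add, pow_zero] at h0
    have : (2 : F) * (x ^ k - 1) = 0 := by linear_combination h0
    have := (mul_eq_zero.mp this).resolve_left h2
    exact sub_eq_zero.mp this
  · push_neg at h2
    classical
    -- char 2
    by_cases hx1 : x = 1
    · simp [hx1]
    -- card F ≥ 4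
    have hchar : ringChar F = 2 := by
      have hdvd : ringChar F ∣ 2 := ringChar.dvd (by exact_mod_cast h2)
      rcases (Nat.dvd_prime Nat.prime_two).mp hdvd with h | h
      · exact absurd h (CharP.ringChar_ne_one)
      · exact h
    have heven := FiniteField.even_card_of_char_two hchar
    have hcard3 : ({0, 1, x} : Finset F).card ≤ 3 := by
      apply le_trans (Finset.card_insert_le _ _)
      simp [Finset.card_insert_le]
      exact Nat.lt_of_le_of_lt (Finset.card_insert_le _ _) (by simp)
    have hge : 3 ≤ Fintype.card F := by
      have : ({0, 1, x} : Finset F).card = 3 := by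
        rw [Finset.card_insert_of_notMem (by simp [Ne.symm hx1, Ne.symm hx]),
          Finset.card_insert_of_notMem (by simp [Ne.symm hx1]), Finset.card_singleton]
      rw [← this, ← Finset.card_univ]
      exact Finset.card_le_card (Finset.subset_univ _)
    have hq4 : 4 ≤ Fintype.card F := by omega
    obtain ⟨a, ha⟩ : ∃ a : F, a ∉ ({0, 1, x} : Finset F) := by
      by_contra habs
      push_neg at habs
      have := Finset.card_le_card (fun a _ => habs a : Finset.univ ⊆ ({0,1,x} : Finset F))
      rw [Finset.card_univ] at this
      omega
    simp only [Finset.mem_insert, Finset.mem_singleton, not_or] at ha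
    obtain ⟨ha0, ha1, hax⟩ := ha
    have haa : a * a ≠ α := by
      intro haa
      apply hax
      have : (a - x) * (a - x) = 0 := by linear_combination haa + hxx + (α - a * x) * h2
      have := mul_self_eq_zero.mp this
      exact sub_eq_zero.mp this
    have hb0 : x * a⁻¹ ≠ 0 := by
      simp [hx, ha0]
    have hbb : (x * a⁻¹) * (x * a⁻¹) ≠ α := by
      intro hbb
      apply ha1
      have ha2 : a * a = 1 := by
        have : x * a⁻¹ * (x * a⁻¹) * (a * a) = α * (a * a) := by rw [hbb]
        field_simp at this
        -- this : x * x = α * (a * a)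
        have h' : α * (a * a) = α * 1 := by linear_combination -this + hxx
        exact mul_left_cancel₀ hα h'
      have : (a - 1) * (a - 1) = 0 := by linear_combination ha2 + (1 - a) * h2
      have := mul_self_eq_zero.mp this
      exact sub_eq_zero.mp this
    have hak := step1_ne hα hk ha0 haa
    have hbk := step1_ne hα hk hb0 hbb
    have hxab : x = a * (x * a⁻¹) := by field_simp
    rw [hxab, mul_pow, hak, hbk, one_mul]
end Step1

lemma fixed_range {F L : Type*} [Field F] [Fintype F] [Field L] (i : F →+* L) {w : L}
    (hw : w ^ Fintype.card F = w) : ∃ x : F, i x = w := by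
  classical
  by_contra habs
  push_neg at habs
  have hq2 : 2 ≤ Fintype.card F := Fintype.one_lt_card
  set q := Fintype.card F with hq
  set pol : L[X] := X ^ q - X with hpol
  have hdeg : pol.natDegree = q := by
    rw [hpol, natDegree_sub_eq_left_of_natDegree_lt, natDegree_X_pow]
    rw [natDegree_X, natDegree_X_pow]; omega
  have hpol0 : pol ≠ 0 := by
    intro h
    rw [h] at hdeg
    simp at hdeg; omega
  have hrootmem : ∀ x : L, x ^ q = x → x ∈ pol.roots.toFinset := by
    intro x hx
    rw [Multiset.mem_toFinset, mem_roots hpol0]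
    simp [hpol, IsRoot, hx]
  set S : Finset L := insert w (Finset.univ.image i) with hS
  have hsub : S ⊆ pol.roots.toFinset := by
    intro x hx
    rw [hS, Finset.mem_insert] at hx
    rcases hx with rfl | hx
    · exact hrootmem _ hw
    · obtain ⟨c, _, rfl⟩ := Finset.mem_image.mp hx
      exact hrootmem _ (by rw [← map_pow, FiniteField.pow_card])
  have hcardS : S.card = q + 1 := by
    rw [hS, Finset.card_insert_of_notMem, Finset.card_image_of_injective _ i.injective,
      Finset.card_univ]
    intro hmem
    obtain ⟨c, _, hc⟩ := Finset.mem_image.mp hmem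
    exact habs c hc
  have := Finset.card_le_card hsub
  have h2 := Multiset.toFinset_card_le pol.roots
  have h3 := pol.card_roots'
  omega

lemma step2 {F : Type*} [Field F] [Fintype F] {α : F} (hα : α ≠ 0) {k : ℕ}
    (hk : ∀ n : ℕ, ∀ β : F, (dickson 1 α (n + k)).eval β = (dickson 1 α n).eval β)
    {L : Type*} [Field L] (i : F →+* L)
    (hfrob : ∀ a b : L, (a + b) ^ Fintype.card F = a ^ Fintype.card F + b ^ Fintype.card F)
    {y : L} (hy : y ^ (Fintype.card F + 1) = i α) : y ^ k = 1 := by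
  have hq2 : 2 ≤ Fintype.card F := Fintype.one_lt_card
  set q := Fintype.card F with hq
  have hy0 : y ≠ 0 := by
    intro h
    rw [h, zero_pow (by omega)] at hy
    exact hα (by simpa using ((_root_.map_eq_zero i).mp hy.symm))
  have hα1 : (i α) ^ (q - 1) = 1 := by
    rw [← map_pow, FiniteField.pow_card_sub_one_eq_one α hα, map_one]
  have hyq2 : y ^ q ^ 2 = y := by
    have h1 : q ^ 2 = (q + 1) * (q - 1) + 1 := by
      have : q - 1 + 1 = q := by omega
      nlinarith [this]
    rw [h1, pow_add, pow_mul, hy, hα1, one_mul, pow_one]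
  set z := y ^ q with hz
  by_cases hzy : z = y
  · obtain ⟨x, hx⟩ := fixed_range i (hzy : y ^ q = y)
    have hx0 : x ≠ 0 := by
      intro h; rw [h, map_zero] at hx; exact hy0 hx.symm
    rw [← hx, ← map_pow, step1 hα hk hx0, map_one]
  · have hyz : y * z = i α := by
      rw [hz, ← pow_succ']
      exact hy
    have hfix : (y + z) ^ q = y + z := by
      rw [hfrob, ← hz, hz, ← pow_mul, ← pow_two, hyq2, add_comm]
    obtain ⟨β, hβ⟩ := fixed_range i hfix
    exact period_pow_eq_one i hk hyz hβ.symm (Ne.symm hzy)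

section Member
variable {F : Type*} [Field F] [Fintype F] {α : F}

lemma member (hα : α ≠ 0) {P : ℕ}
    (hA : (Fintype.card F - 1) ∣ P)
    (hB : ∃ e : ℕ, P = (Fintype.card F + 1) * e ∧ α ^ e = 1) :
    ∀ n : ℕ, ∀ β : F, (dickson 1 α (n + P)).eval β = (dickson 1 α n).eval β := by
  classical
  intro n β
  have hq2 : 2 ≤ Fintype.card F := Fintype.one_lt_card
  set q := Fintype.card F with hq
  by_cases hroot : ∃ y : F, y * y - β * y + α = 0
  · obtain ⟨y, hy⟩ := hroot
    have hy0 : y ≠ 0 := by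
      intro h; rw [h] at hy; simp at hy; exact hα hy
    set z := β - y with hz
    have hyz : y * z = α := by rw [hz]; linear_combination -hy
    have hyβ : y + z = β := by rw [hz]; ring
    have hyP : y ^ P = 1 := by
      obtain ⟨c, rfl⟩ := hA
      rw [pow_mul, FiniteField.pow_card_sub_one_eq_one y hy0, one_pow]
    have hz0 : z ≠ 0 := by
      intro h; rw [h, mul_zero] at hyz; exact hα hyz.symm
    have hzP : z ^ P = 1 := by
      obtain ⟨c, rfl⟩ := hA
      rw [pow_mul, FiniteField.pow_card_sub_one_eq_one z hz0, one_pow]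
    have e1 := dickson_eval_pair y z (n + P)
    have e2 := dickson_eval_pair y z n
    rw [hyz, hyβ] at e1 e2
    rw [e1, e2, pow_add, pow_add, hyP, hzP, mul_one, mul_one]
  · -- irreducible case
    set f : F[X] := X ^ 2 - (C β * X - C α) with hf
    have hmonic : f.Monic := by
      apply monic_X_pow_sub
      apply lt_of_le_of_lt (degree_sub_le _ _)
      rw [max_lt_iff]
      constructor
      · exact lt_of_le_of_lt (degree_C_mul_X_le β) (by norm_num)
      · exact lt_of_le_of_lt degree_C_le (by norm_num)
    have hcoeff0 : f.coeff 0 = α := by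
      simp [hf, coeff_X_pow]
    have hcoeff1 : f.coeff 1 = -β := by
      simp [hf, coeff_X_pow]
    have hlt : (C β * X - C α).natDegree < (X ^ 2 : F[X]).natDegree := by
      rw [natDegree_X_pow]
      apply lt_of_le_of_lt (natDegree_sub_le _ _)
      rw [max_lt_iff]
      constructor
      · exact lt_of_le_of_lt (natDegree_C_mul_le _ _) (by rw [natDegree_X]; omega)
      · rw [natDegree_C]; omega
    have hdeg : f.natDegree = 2 := by
      rw [hf, natDegree_sub_eq_left_of_natDegree_lt hlt, natDegree_X_pow]
    have hirr : Irreducible f := by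
      by_contra hnot
      obtain ⟨c₁, c₂, h1, h2⟩ :=
        (hmonic.not_irreducible_iff_exists_add_mul_eq_coeff hdeg).mp hnot
      rw [hcoeff0] at h1
      rw [hcoeff1] at h2
      exact hroot ⟨-c₁, by linear_combination h1 - c₁ * h2⟩
    haveI : Fact (Irreducible f) := ⟨hirr⟩
    set K := AdjoinRoot f with hK
    set j : F →+* K := AdjoinRoot.of f with hj
    have hjinj : Function.Injective j := AdjoinRoot.coe_injective' (f := f)
    set y : K := AdjoinRoot.root f with hy
    have hrel : y ^ 2 - (j β * y - j α) = 0 := by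
      have := AdjoinRoot.eval₂_root f
      rw [hf] at this
      simpa using this
    set z : K := j β - y with hz
    have hyz : y * z = j α := by rw [hz]; linear_combination -hrel
    have hynr : ∀ c : F, j c ≠ y := by
      intro c hc
      apply hroot
      refine ⟨c, hjinj ?_⟩
      rw [map_add, map_sub, map_mul, map_mul, map_zero, hc]
      linear_combination hrel
    -- Frobenius facts
    obtain ⟨m, hpprime, hcard⟩ := FiniteField.card F (ringChar F)
    haveI : Fact (Nat.Prime (ringChar F)) := ⟨hpprime⟩
    haveI : CharP K (ringChar F) := charP_of_injective_ringHom hjinj (ringChar F)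
    have hfrobK : ∀ a b : K, (a + b) ^ q = a ^ q + b ^ q := by
      intro a b; rw [hq, hcard]; exact add_pow_char_pow (ringChar F) (↑m) (x := a) (y := b)
    have hnegK : ((-1 : K)) ^ q = -1 := by
      rw [hq, hcard]; exact neg_one_pow_char_pow K (ringChar F) ↑m
    have hyq : y ^ q = z := by
      have h1 : (y ^ 2 + (-(j β * y) + j α)) ^ q = 0 := by
        rw [show y ^ 2 + (-(j β * y) + j α) = y ^ 2 - (j β * y - j α) by ring, hrel,
          zero_pow (by omega)]
      rw [hfrobK, hfrobK, neg_pow, hnegK, mul_pow] at h1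
      rw [hq] at h1
      rw [← map_pow, FiniteField.pow_card, ← map_pow, FiniteField.pow_card] at h1
      rw [← hq] at h1
      have hfrel : (y ^ q) ^ 2 - (j β * (y ^ q)) + j α = 0 := by
        rw [← pow_mul, mul_comm 2 q, pow_mul] at h1
        linear_combination h1
      have hfac : (y ^ q - y) * (y ^ q - z) = 0 := by
        rw [hz]
        linear_combination hfrel - hrel
      rcases mul_eq_zero.mp hfac with h | h
      · exfalso
        have hyfix : y ^ q = y := by linear_combination h
        rw [hq] at hyfix
        obtain ⟨c, hc⟩ := fixed_range j hyfix
        exact hynr c hc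
      · linear_combination h
    have hyq1 : y ^ (q + 1) = j α := by
      rw [pow_succ, hyq, hz]
      linear_combination -hrel
    have hzq1 : z ^ (q + 1) = j α := by
      rw [← hyq, ← pow_mul, mul_comm, pow_mul, hyq1, hq, ← map_pow, FiniteField.pow_card]
    obtain ⟨e, hPe, hαe⟩ := hB
    have hyP : y ^ P = 1 := by
      rw [hPe, pow_mul, hyq1, ← map_pow, hαe, map_one]
    have hzP : z ^ P = 1 := by
      rw [hPe, pow_mul, hzq1, ← map_pow, hαe, map_one]
    have hyβ : y + z = j β := by rw [hz]; ring
    apply hjinj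
    have e1 := dickson_eval_pair y z (n + P)
    have e2 := dickson_eval_pair y z n
    rw [hyz, hyβ] at e1 e2
    rw [← eval₂_at_apply, ← eval_map, map_dickson, ← eval₂_at_apply, ← eval_map, map_dickson,
      e1, e2, pow_add, pow_add, hyP, hzP, mul_one, mul_one]
end Member

section Lower
variable {F : Type*} [Field F] [Fintype F] {α : F} {k : ℕ}

open Classical in
lemma lower_dvd (hα : α ≠ 0)
    (hk : ∀ n : ℕ, ∀ β : F, (dickson 1 α (n + k)).eval β = (dickson 1 α n).eval β) :
    (if Odd (Fintype.card F) ∧ IsSquare α then (Fintype.card F ^ 2 - 1) / 2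
      else Fintype.card F ^ 2 - 1) ∣ k := by
  classical
  have hq2 : 2 ≤ Fintype.card F := Fintype.one_lt_card
  set q := Fintype.card F with hq
  -- (q-1) ∣ k
  have hdvd1 : (q - 1) ∣ k := by
    obtain ⟨g, hg⟩ := IsCyclic.exists_generator (α := Fˣ)
    have hog : orderOf g = q - 1 := by
      rw [orderOf_eq_card_of_forall_mem_zpowers hg, Nat.card_eq_fintype_card, Fintype.card_units]
    have hgv : (g : F) ^ k = 1 := step1 hα hk (Units.ne_zero g)
    have hgk : g ^ k = 1 := Units.ext (by rwa [Units.val_pow_eq_pow_val, Units.val_one])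
    exact hog ▸ orderOf_dvd_of_pow_eq_one hgk
  -- set up algebraic closure
  set L := AlgebraicClosure F with hL
  set i : F →+* L := algebraMap F L with hi
  obtain ⟨m, hpprime, hcard⟩ := FiniteField.card F (ringChar F)
  haveI : Fact (Nat.Prime (ringChar F)) := ⟨hpprime⟩
  haveI hchL : CharP L (ringChar F) :=
    charP_of_injective_ringHom (algebraMap F L).injective (ringChar F)
  have hfrob : ∀ a b : L, (a + b) ^ Fintype.card F = a ^ Fintype.card F + b ^ Fintype.card F := by
    intro a b; rw [hcard]; exact add_pow_char_pow (ringChar F) (↑m) (x := a) (y := b)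
  have hne0 : ((q + 1 : ℕ) : L) ≠ 0 := by
    intro h
    have hd := (CharP.cast_eq_zero_iff L (ringChar F) (q + 1)).mp h
    have hdq : ringChar F ∣ q := by
      rw [hq, hcard]; exact dvd_pow_self _ (by exact_mod_cast m.pos.ne')
    have h1 : ringChar F ∣ 1 := by
      have := Nat.dvd_sub hd hdq
      simpa using this
    exact Nat.Prime.one_lt hpprime |>.ne' (Nat.dvd_one.mp h1)
  haveI : NeZero ((q + 1 : ℕ) : L) := ⟨hne0⟩
  obtain ⟨ζ, hζ⟩ := HasEnoughRootsOfUnity.exists_primitiveRoot L (q + 1)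
  obtain ⟨y₀, hy₀root⟩ := IsAlgClosed.exists_root (X ^ (q + 1) - C (i α))
    (by rw [degree_X_pow_sub_C (by omega)]; exact_mod_cast (by omega : (q + 1 : ℕ) ≠ 0))
  have hy₀ : y₀ ^ (q + 1) = i α := by
    have := hy₀root
    simp only [IsRoot, eval_sub, eval_pow, eval_X, eval_C, sub_eq_zero] at this
    exact this
  have hy₀k : y₀ ^ k = 1 := step2 hα hk i hfrob (by rw [← hq]; exact hy₀)
  have hζy₀ : (ζ * y₀) ^ (q + 1) = i α := by
    rw [mul_pow, hζ.pow_eq_one, one_mul, hy₀]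
  have hζy₀k : (ζ * y₀) ^ k = 1 := step2 hα hk i hfrob (by rw [← hq]; exact hζy₀)
  have hζk : ζ ^ k = 1 := by
    rw [mul_pow, hy₀k, mul_one] at hζy₀k
    exact hζy₀k
  have hdvd2 : (q + 1) ∣ k := (hζ.pow_eq_one_iff_dvd k).mp hζk
  by_cases hcase : Odd q ∧ IsSquare α
  · rw [if_pos hcase]
    obtain ⟨r, hr⟩ := hcase.1
    have hlcm : Nat.lcm (q - 1) (q + 1) ∣ k := Nat.lcm_dvd hdvd1 hdvd2
    have hco : Nat.Coprime r (r + 1) := by simpa using (Nat.coprime_add_self_right (m := r) (n := 1)).mpr (Nat.coprime_one_right r)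
    have hval : Nat.lcm (q - 1) (q + 1) = 2 * (r * (r + 1)) := by
      have e1 : q - 1 = 2 * r := by omega
      have e2 : q + 1 = 2 * (r + 1) := by omega
      rw [e1, e2, Nat.lcm_mul_left, Nat.Coprime.lcm_eq_mul hco]
    have hsub : (q ^ 2 - 1) / 2 = 2 * (r * (r + 1)) := by
      have h1 : q ^ 2 - 1 = 2 * (r * (r + 1)) * 2 :=
        Nat.sub_eq_of_eq_add (by rw [hr]; ring)
      rw [h1, Nat.mul_div_cancel _ two_pos]
    rw [hsub, ← hval]
    exact hlcm
  · rw [if_neg hcase]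
    by_cases hodd : Odd q
    · -- q odd, α not a square
      have hnsq : ¬ IsSquare α := fun h => hcase ⟨hodd, h⟩
      obtain ⟨r, hr⟩ := hodd
      have hchar2 : ringChar F ≠ 2 := by
        intro h
        have := FiniteField.even_card_of_char_two h
        rw [← hq] at this
        omega
      have hα2 : α ^ (q / 2) = -1 := by
        refine (FiniteField.pow_dichotomy hchar2 hα).resolve_left fun h => hnsq ?_
        exact (FiniteField.isSquare_iff hchar2 hα).mpr (by rw [← hq] at h ⊢; exact h)
      have hqdiv : q / 2 = r := by omega
      have hαr : α ^ r = -1 := by rw [← hqdiv]; exact hα2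
      have hy₀half : y₀ ^ (2 * (r * (r + 1))) = -1 := by
        have e2 : 2 * (r * (r + 1)) = (q + 1) * r := by rw [hr]; ring
        rw [e2, pow_mul, hy₀, ← map_pow, hαr, map_neg, map_one]
      have hlcm : Nat.lcm (q - 1) (q + 1) ∣ k := Nat.lcm_dvd hdvd1 hdvd2
      have hco : Nat.Coprime r (r + 1) := by simpa using (Nat.coprime_add_self_right (m := r) (n := 1)).mpr (Nat.coprime_one_right r)
      have hval : Nat.lcm (q - 1) (q + 1) = 2 * (r * (r + 1)) := by
        have e1 : q - 1 = 2 * r := by omega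
        have e2 : q + 1 = 2 * (r + 1) := by omega
        rw [e1, e2, Nat.lcm_mul_left, Nat.Coprime.lcm_eq_mul hco]
      rw [hval] at hlcm
      obtain ⟨m', hm'⟩ := hlcm
      have hm'1 : ((-1 : L)) ^ m' = 1 := by
        rw [hm', pow_mul, hy₀half] at hy₀k
        exact hy₀k
      have hneg : (-1 : L) ≠ 1 := by
        haveI : Fact (2 < ringChar F) := ⟨by
          have := hpprime.two_le
          rcases Nat.lt_or_ge 2 (ringChar F) with h | h
          · exact h
          · exact absurd (by omega) hchar2⟩
        exact CharP.neg_one_ne_one L (ringChar F)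
      have hmeven : Even m' := by
        by_contra hoddm
        rw [Nat.not_even_iff_odd] at hoddm
        rw [hoddm.neg_one_pow] at hm'1
        exact hneg hm'1
      obtain ⟨t, ht⟩ := hmeven
      refine ⟨t, ?_⟩
      have h1 : q ^ 2 - 1 = 2 * (r * (r + 1)) * 2 :=
        Nat.sub_eq_of_eq_add (by rw [hr]; ring)
      rw [hm', ht, h1]
      ring
    · -- q even
      have hq0 : q % 2 = 0 := by
        rw [Nat.not_odd_iff] at hodd
        exact hodd
      have hco : Nat.Coprime (q - 1) (q + 1) := by
        have he : q + 1 - (q - 1) = 2 := by omega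
        have hd2 : Nat.gcd (q - 1) (q + 1) ∣ 2 := by
          rw [← he]
          exact Nat.dvd_sub (Nat.gcd_dvd_right _ _) (Nat.gcd_dvd_left _ _)
        have hdodd := Nat.gcd_dvd_left (q - 1) (q + 1)
        rcases (Nat.dvd_prime Nat.prime_two).mp hd2 with h | h
        · exact h
        · exfalso
          rw [h] at hdodd
          omega
      have hdvdfull : (q - 1) * (q + 1) ∣ k := hco.mul_dvd_of_dvd_of_dvd hdvd1 hdvd2
      have h1 : q ^ 2 - 1 = (q - 1) * (q + 1) := by
        obtain ⟨a, ha⟩ : ∃ a, q = a + 2 := ⟨q - 2, by omega⟩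
        rw [ha, show a + 2 - 1 = a + 1 by omega]
        exact Nat.sub_eq_of_eq_add (by ring)
      rw [h1]
      exact hdvdfull
end Lower

open Classical in
/-- The least period of the sequence `n ↦ (D_n(·, α) : 𝔽_q → 𝔽_q)` is `(q²-1)/2`
if `q` is odd and `α` is a square, and `q²-1` otherwise. -/
theorem dickson_exact_period (F : Type*) [Field F] [Fintype F] (α : F) (hα : α ≠ 0) :
    IsLeast {k : ℕ | 0 < k ∧ ∀ n : ℕ, ∀ β : F,
        (dickson 1 α (n + k)).eval β = (dickson 1 α n).eval β}
      (if Odd (Fintype.card F) ∧ IsSquare α then (Fintype.card F ^ 2 - 1) / 2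
        else Fintype.card F ^ 2 - 1) := by
  have hq2 : 2 ≤ Fintype.card F := Fintype.one_lt_card
  set q := Fintype.card F with hq
  constructor
  · by_cases hcase : Odd q ∧ IsSquare α
    · rw [if_pos hcase]
      obtain ⟨r, hr⟩ := hcase.1
      have hr1 : 1 ≤ r := by omega
      have hhalf : (q ^ 2 - 1) / 2 = 2 * (r * (r + 1)) := by
        have h1 : q ^ 2 - 1 = 2 * (r * (r + 1)) * 2 :=
          Nat.sub_eq_of_eq_add (by rw [hr]; ring)
        rw [h1, Nat.mul_div_cancel _ two_pos]
      constructor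
      · rw [hhalf]; positivity
      · apply member hα
        · refine ⟨r + 1, ?_⟩
          rw [hhalf, show q - 1 = 2 * r by omega]
          ring
        · refine ⟨r, ?_, ?_⟩
          · rw [hhalf, show q + 1 = 2 * (r + 1) by omega]
            ring
          · have hchar2 : ringChar F ≠ 2 := by
              intro h
              have := FiniteField.even_card_of_char_two h
              rw [← hq] at this
              omega
            have := (FiniteField.isSquare_iff hchar2 hα).mp hcase.2
            rwa [← hq, show q / 2 = r by omega] at this
    · rw [if_neg hcase]
      have h1 : q ^ 2 - 1 = (q - 1) * (q + 1) := by
        obtain ⟨a, ha⟩ : ∃ a, q = a + 2 := ⟨q - 2, by omega⟩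
        rw [ha, show a + 2 - 1 = a + 1 by omega]
        exact Nat.sub_eq_of_eq_add (by ring)
      constructor
      · have : 4 ≤ q ^ 2 := by nlinarith
        omega
      · apply member hα
        · exact ⟨q + 1, h1⟩
        · exact ⟨q - 1, by rw [h1]; ring, FiniteField.pow_card_sub_one_eq_one α hα⟩
  · rintro k ⟨hkpos, hk⟩
    exact Nat.le_of_dvd hkpos (lower_dvd hα hk)
end

section
/- Let $q$ be an even prime power and let $n$ be a positive integer such that $D_n(\beta,1) = \beta$ for all $\beta \in \mathbb{F}_q$. Then $n \equiv \pm 1$ or $\pm q \pmod{q^2-1}$, and in particular $n^2 \equiv 1 \pmod{q^2-1}$. -/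
open Polynomial

private lemma dickson_dvd' {K : Type*} [Field K] (u : K) (hu : u ≠ 0) (n : ℕ) (hn : 0 < n)
    (h : u ^ n + (u⁻¹) ^ n = u + u⁻¹) : u ^ (n - 1) = 1 ∨ u ^ (n + 1) = 1 := by
  have h1 : u * u⁻¹ = 1 := mul_inv_cancel₀ hu
  have h2 : (u ^ n - u) * (u ^ n - u⁻¹) = 0 := by
    have e : (u ^ n - u) * (u ^ n - u⁻¹)
        = u ^ n * u ^ n - u ^ n * (u + u⁻¹) + u * u⁻¹ := by ring
    rw [e, ← h, h1, mul_add, ← mul_pow u u⁻¹, h1, one_pow]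
    ring
  rcases mul_eq_zero.1 h2 with h3 | h3
  · left
    have h3' : u ^ n = u := sub_eq_zero.1 h3
    have e : u ^ (n - 1) * u = u ^ n := by
      rw [← pow_succ]; congr 1; omega
    have h4 : u ^ (n - 1) * u = 1 * u := by rw [e, h3', one_mul]
    exact mul_right_cancel₀ hu h4
  · right
    rw [pow_succ, sub_eq_zero.1 h3, inv_mul_cancel₀ hu]

private lemma mem_range_of_pow_card' (F : Type*) [Field F] [Fintype F]
    (x : AlgebraicClosure F) (hx : x ^ (Fintype.card F) = x) :
    ∃ a : F, algebraMap F (AlgebraicClosure F) a = x := by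
  classical
  let E := AlgebraicClosure F
  let q := Fintype.card F
  have h1q : 1 < q := Fintype.one_lt_card
  set P : E[X] := X ^ q - X with hPdef
  have hP : P ≠ 0 := FiniteField.X_pow_card_sub_X_ne_zero E h1q
  set T := P.roots.toFinset with hT
  set I : Finset E := Finset.univ.image (algebraMap F E) with hI
  have hsub : I ⊆ T := by
    intro y hy
    obtain ⟨a, _, rfl⟩ := Finset.mem_image.1 hy
    rw [hT, Multiset.mem_toFinset, mem_roots hP]
    simp only [IsRoot, hPdef, eval_sub, eval_pow, eval_X]
    rw [← map_pow, FiniteField.pow_card, sub_self]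
  have hTcard : T.card ≤ q := by
    refine le_trans (Multiset.toFinset_card_le _) ?_
    have := P.card_roots'
    rwa [FiniteField.X_pow_card_sub_X_natDegree_eq E h1q] at this
  have hIcard : I.card = q := by
    rw [hI, Finset.card_image_of_injective _ (algebraMap F E).injective, Finset.card_univ]
  have hIT : I = T := Finset.eq_of_subset_of_card_le hsub (by rw [hIcard]; exact hTcard)
  have hxT : x ∈ T := by
    rw [hT, Multiset.mem_toFinset, mem_roots hP]
    simp only [IsRoot, hPdef, eval_sub, eval_pow, eval_X]
    rw [hx, sub_self]
  rw [← hIT] at hxT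
  obtain ⟨a, _, ha⟩ := Finset.mem_image.1 hxT
  exact ⟨a, ha⟩

/-- For even `q`, if `D_n(·, 1)` is the identity on `𝔽_q` then
`n ≡ ±1, ±q (mod q²-1)`, and in particular `n² ≡ 1 (mod q²-1)`. -/
theorem dickson_identity_even (F : Type*) [Field F] [Fintype F]
    (heven : Even (Fintype.card F)) (n : ℕ) (hn : 0 < n)
    (h : ∀ β : F, (dickson 1 (1 : F) n).eval β = β) :
    ((n : ℤ) ≡ 1 [ZMOD ((Fintype.card F : ℤ) ^ 2 - 1)] ∨
      (n : ℤ) ≡ -1 [ZMOD ((Fintype.card F : ℤ) ^ 2 - 1)] ∨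
      (n : ℤ) ≡ (Fintype.card F : ℤ) [ZMOD ((Fintype.card F : ℤ) ^ 2 - 1)] ∨
      (n : ℤ) ≡ -(Fintype.card F : ℤ) [ZMOD ((Fintype.card F : ℤ) ^ 2 - 1)]) ∧
    (n : ℤ) ^ 2 ≡ 1 [ZMOD ((Fintype.card F : ℤ) ^ 2 - 1)] := by
  classical
  set q := Fintype.card F with hq
  have h1q : 1 < q := Fintype.one_lt_card
  -- characteristic 2
  obtain ⟨p, hcp⟩ := CharP.exists F
  obtain ⟨k, hp, hcard⟩ := FiniteField.card F p
  have hp2 : p = 2 := by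
    have h2 : (2 : ℕ) ∣ p ^ (k : ℕ) := by rw [← hcard]; exact heven.two_dvd
    have h3 : (2 : ℕ) ∣ p := Nat.Prime.dvd_of_dvd_pow Nat.prime_two h2
    exact ((Nat.prime_dvd_prime_iff_eq Nat.prime_two hp).mp h3).symm
  subst hp2
  haveI hcp2 : CharP F 2 := hcp
  haveI : CharP (AlgebraicClosure F) 2 :=
    charP_of_injective_algebraMap (RingHom.injective (algebraMap F (AlgebraicClosure F))) 2
  -- Part A: the multiplicative group of F
  have hA : (q - 1) ∣ (n - 1) ∨ (q - 1) ∣ (n + 1) := by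
    obtain ⟨g, hg⟩ := IsCyclic.exists_generator (α := Fˣ)
    have hord : orderOf g = q - 1 := by
      rw [orderOf_eq_card_of_forall_mem_zpowers hg, Nat.card_units, Nat.card_eq_fintype_card]
    have hne : (g : F) ≠ 0 := g.ne_zero
    have hb := h ((g : F) + (g : F)⁻¹)
    rw [dickson_one_one_eval_add_inv (g : F) (g : F)⁻¹ (mul_inv_cancel₀ hne)] at hb
    rcases dickson_dvd' (g : F) hne n hn hb with h3 | h3
    · exact Or.inl (hord ▸ orderOf_dvd_of_pow_eq_one (by ext; push_cast; exact h3))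
    · exact Or.inr (hord ▸ orderOf_dvd_of_pow_eq_one (by ext; push_cast; exact h3))
  -- Part B: the (q+1)-st roots of unity in the algebraic closure
  have hB : (q + 1) ∣ (n - 1) ∨ (q + 1) ∣ (n + 1) := by
    have hq1odd : ¬ (2 ∣ q + 1) := by obtain ⟨m, hm⟩ := heven; omega
    have hzE : ((q + 1 : ℕ) : AlgebraicClosure F) ≠ 0 := by
      rw [Ne, CharP.cast_eq_zero_iff (AlgebraicClosure F) 2]; exact hq1odd
    let Q : ℕ+ := ⟨q + 1, Nat.succ_pos q⟩
    haveI : NeZero ((Q : ℕ) : AlgebraicClosure F) := ⟨hzE⟩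
    obtain ⟨ζ, hζ⟩ : ∃ ζ : AlgebraicClosure F, IsPrimitiveRoot ζ (Q : ℕ) := by
      obtain ⟨z, hz⟩ := IsAlgClosed.exists_root _
        (degree_cyclotomic_pos (Q : ℕ) (AlgebraicClosure F) Q.pos).ne.symm
      exact ⟨z, isRoot_cyclotomic_iff.1 hz⟩
    have hζ' : IsPrimitiveRoot ζ (q + 1) := hζ
    have hζ0 : ζ ≠ 0 := hζ'.ne_zero (by omega)
    have hpow : ζ ^ (q + 1) = 1 := hζ'.pow_eq_one
    have hzinv : ζ ^ q = ζ⁻¹ := eq_inv_of_mul_eq_one_left (by rw [← pow_succ]; exact hpow)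
    have hfix : (ζ + ζ⁻¹) ^ q = ζ + ζ⁻¹ := by
      have hqc : q = 2 ^ (k : ℕ) := hcard
      rw [hqc, add_pow_char_pow, ← hqc, hzinv, inv_pow, hzinv, inv_inv, add_comm]
    obtain ⟨β, hβ⟩ := mem_range_of_pow_card' F (ζ + ζ⁻¹) hfix
    have hbb : eval ((algebraMap F (AlgebraicClosure F)) β)
        ((dickson 1 (1 : F) n).map (algebraMap F (AlgebraicClosure F)))
        = (algebraMap F (AlgebraicClosure F)) β := by
      rw [eval_map, eval₂_hom, h β]
    rw [map_dickson, map_one, hβ,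
      dickson_one_one_eval_add_inv ζ ζ⁻¹ (mul_inv_cancel₀ hζ0)] at hbb
    rcases dickson_dvd' ζ hζ0 n hn hbb with h3 | h3
    · exact Or.inl (hζ'.pow_eq_one_iff_dvd _ |>.1 h3)
    · exact Or.inr (hζ'.pow_eq_one_iff_dvd _ |>.1 h3)
  -- arithmetic wrap-up
  have hco : Nat.Coprime (q - 1) (q + 1) := by
    have hodd : ¬ 2 ∣ (q - 1) := by obtain ⟨m, hm⟩ := heven; omega
    have hd1 : Nat.gcd (q - 1) (q + 1) ∣ q - 1 := Nat.gcd_dvd_left _ _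
    have hd2 : Nat.gcd (q - 1) (q + 1) ∣ q + 1 := Nat.gcd_dvd_right _ _
    have hd : Nat.gcd (q - 1) (q + 1) ∣ 2 := by
      have := Nat.dvd_sub hd2 hd1
      rwa [show q + 1 - (q - 1) = 2 by omega] at this
    rcases (Nat.dvd_prime Nat.prime_two).1 hd with h' | h'
    · exact h'
    · exact absurd (h' ▸ hd1) hodd
  have hA' : ((q : ℤ) - 1) ∣ ((n : ℤ) - 1) ∨ ((q : ℤ) - 1) ∣ ((n : ℤ) + 1) := by
    rcases hA with h' | h'
    · left
      have := Int.natCast_dvd_natCast.mpr h'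
      rwa [Nat.cast_sub (by omega), Nat.cast_sub (by omega), Nat.cast_one] at this
    · right
      have := Int.natCast_dvd_natCast.mpr h'
      rwa [Nat.cast_sub (by omega), Nat.cast_add, Nat.cast_one] at this
  have hB' : ((q : ℤ) + 1) ∣ ((n : ℤ) - 1) ∨ ((q : ℤ) + 1) ∣ ((n : ℤ) + 1) := by
    rcases hB with h' | h'
    · left
      have := Int.natCast_dvd_natCast.mpr h'
      rwa [Nat.cast_add, Nat.cast_sub (by omega), Nat.cast_one] at this
    · right
      have := Int.natCast_dvd_natCast.mpr h'
      rwa [Nat.cast_add, Nat.cast_add, Nat.cast_one] at this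
  have hcoZ : ((q : ℤ) - 1).natAbs.Coprime ((q : ℤ) + 1).natAbs := by
    have e1 : ((q : ℤ) - 1).natAbs = q - 1 := by omega
    have e2 : ((q : ℤ) + 1).natAbs = q + 1 := by omega
    rw [e1, e2]; exact hco
  have hcomb : ∀ c : ℤ, ((q : ℤ) - 1) ∣ ((n : ℤ) - c) → ((q : ℤ) + 1) ∣ ((n : ℤ) - c) →
      (n : ℤ) ≡ c [ZMOD ((q : ℤ) ^ 2 - 1)] := by
    intro c h1 h2
    have hM : ((q : ℤ) ^ 2 - 1) = ((q : ℤ) - 1) * ((q : ℤ) + 1) := by ring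
    rw [hM]
    refine (Int.modEq_and_modEq_iff_modEq_mul hcoZ).1 ⟨?_, ?_⟩
    · exact Int.modEq_iff_dvd.2 (dvd_sub_comm.1 h1)
    · exact Int.modEq_iff_dvd.2 (dvd_sub_comm.1 h2)
  have key : (n : ℤ) ≡ 1 [ZMOD ((q : ℤ) ^ 2 - 1)] ∨
      (n : ℤ) ≡ -1 [ZMOD ((q : ℤ) ^ 2 - 1)] ∨
      (n : ℤ) ≡ (q : ℤ) [ZMOD ((q : ℤ) ^ 2 - 1)] ∨
      (n : ℤ) ≡ -(q : ℤ) [ZMOD ((q : ℤ) ^ 2 - 1)] := by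
    rcases hA' with h1 | h1 <;> rcases hB' with h2 | h2
    · exact Or.inl (hcomb 1 h1 h2)
    · refine Or.inr (Or.inr (Or.inl (hcomb (q : ℤ) ?_ ?_)))
      · have : (n : ℤ) - q = ((n : ℤ) - 1) - ((q : ℤ) - 1) := by ring
        rw [this]; exact dvd_sub h1 dvd_rfl
      · have : (n : ℤ) - q = ((n : ℤ) + 1) - ((q : ℤ) + 1) := by ring
        rw [this]; exact dvd_sub h2 dvd_rfl
    · refine Or.inr (Or.inr (Or.inr (hcomb (-(q : ℤ)) ?_ ?_)))
      · have : (n : ℤ) - (-(q : ℤ)) = ((n : ℤ) + 1) + ((q : ℤ) - 1) := by ring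
        rw [this]; exact dvd_add h1 dvd_rfl
      · have : (n : ℤ) - (-(q : ℤ)) = ((n : ℤ) - 1) + ((q : ℤ) + 1) := by ring
        rw [this]; exact dvd_add h2 dvd_rfl
    · exact Or.inr (Or.inl (hcomb (-1) (by simpa using h1) (by simpa using h2)))
  refine ⟨key, ?_⟩
  have hq2 : ((q : ℤ)) ^ 2 ≡ 1 [ZMOD ((q : ℤ) ^ 2 - 1)] := by
    exact Int.modEq_iff_dvd.2 ⟨-1, by ring⟩
  rcases key with h' | h' | h' | h'
  · simpa using h'.pow 2
  · simpa using h'.pow 2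
  · exact (h'.pow 2).trans hq2
  · have := h'.pow 2
    rw [show (-(q : ℤ)) ^ 2 = (q : ℤ) ^ 2 by ring] at this
    exact this.trans hq2
end

section
/- Let $q$ be a power of an odd prime $p$. For each integer $k$ with $0 \le k \le q-2$, let $a_{j,k} = \frac{q^2-1}{q^2-1-(j(q-1)+k)}\binom{q^2-1-(j(q-1)+k)}{j(q-1)+k}$ for $0 \le j \le \frac{q-1}{2}$, excluding the index $(j,k) = (\frac{q+1}{2}, 0)$. Then $\sum_{j=0}^{\frac{q-1}{2}} a_{j,k} \equiv 0 \pmod{p}$ for every fixed $k$ with $(j,k)$ ranging over the allowed indices. -/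
open Finset Polynomial

namespace DicksonAux

variable {R : Type*} [CommRing R]

/-- Fibonacci-like polynomial value: `U y m = ∑ i, C(m-1-i, i) y^i`. -/
def Useq (y : R) (m : ℕ) : R :=
  ∑ i ∈ Finset.range m, (Nat.choose (m - 1 - i) i : R) * y ^ i

lemma Useq_zero (y : R) : Useq y 0 = 0 := by simp [Useq]

lemma Useq_one (y : R) : Useq y 1 = 1 := by simp [Useq]

lemma Useq_rec (y : R) (m : ℕ) : Useq y (m + 2) = Useq y (m + 1) + y * Useq y m := by
  have h1 : Useq y (m + 2) = ∑ i ∈ Finset.range (m + 1),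
      (Nat.choose (m + 1 - i) i : R) * y ^ i := by
    rw [Useq, Finset.sum_range_succ]
    have : m + 2 - 1 - (m + 1) = 0 := by omega
    simp only [this, Nat.choose_zero_succ, Nat.cast_zero, zero_mul, add_zero]
    refine Finset.sum_congr rfl fun i hi => ?_
    congr 2 <;> omega
  have h2 : Useq y (m + 1) = ∑ i ∈ Finset.range (m + 1),
      (Nat.choose (m - i) i : R) * y ^ i := by
    rw [Useq]
    refine Finset.sum_congr rfl fun i hi => ?_
    congr 2 <;> omega
  rw [h1, h2]
  rw [Finset.sum_range_succ' (fun i => (Nat.choose (m + 1 - i) i : R) * y ^ i) m]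
  rw [Finset.sum_range_succ' (fun i => (Nat.choose (m - i) i : R) * y ^ i) m]
  have hpascal : ∀ i ∈ Finset.range m,
      (Nat.choose (m + 1 - (i + 1)) (i + 1) : R) * y ^ (i + 1)
        = (Nat.choose (m - (i + 1)) (i + 1) : R) * y ^ (i + 1)
          + y * ((Nat.choose (m - 1 - i) i : R) * y ^ i) := by
    intro i hi
    rw [Finset.mem_range] at hi
    have h3 : m + 1 - (i + 1) = (m - (i + 1)) + 1 := by omega
    have h4 : m - 1 - i = m - (i + 1) := by omega
    rw [h3, h4, Nat.choose_succ_succ]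
    push_cast
    ring
  rw [Finset.sum_congr rfl hpascal, Finset.sum_add_distrib]
  simp only [Nat.choose_zero_right, Nat.sub_zero, Nat.cast_one, pow_zero, mul_one]
  rw [← Finset.mul_sum, Useq]
  ring

lemma Useq_pow (y α : R) (hα : α ^ 2 = α + y) :
    ∀ m : ℕ, α ^ (m + 1) = Useq y (m + 1) * α + y * Useq y m := by
  intro m
  induction m with
  | zero => simp [Useq_zero, Useq_one]
  | succ m ih =>
    have : α ^ (m + 2) = α ^ (m + 1) * α := by ring
    rw [this, ih, Useq_rec]
    have : (Useq y (m + 1) * α + y * Useq y m) * α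
        = Useq y (m + 1) * α ^ 2 + y * Useq y m * α := by ring
    rw [this, hα]
    ring

end DicksonAux
namespace DicksonAux

variable {R : Type*} [CommRing R]

/-- The integer value of the Dickson coefficient. -/
def Acoef (n i : ℕ) : ℕ :=
  Nat.choose (n - i) i + (if i = 0 then 0 else Nat.choose (n - 1 - i) (i - 1))

/-- Coefficient matching: the generating sum of `Acoef` up to `n/2` equals
`Useq (n+1) + y * Useq (n-1)`. -/
lemma sum_Acoef_eq (y : R) (n : ℕ) (hn : 2 ≤ n) (heven : n % 2 = 0) :
    ∑ i ∈ Finset.range (n / 2 + 1), (Acoef n i : R) * y ^ i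
      = Useq y (n + 1) + y * Useq y (n - 1) := by
  set M := n / 2 with hM
  have hMn : 2 * M = n := by omega
  -- first piece
  have h1 : Useq y (n + 1) = ∑ i ∈ Finset.range (M + 1), (Nat.choose (n - i) i : R) * y ^ i := by
    rw [Useq]
    have hsub : Finset.range (M + 1) ⊆ Finset.range (n + 1) := by
      apply Finset.range_subset_range.2; omega
    simp only [Nat.add_sub_cancel]
    refine (Finset.sum_subset hsub fun i hi hni => ?_).symm
    rw [Finset.mem_range] at hi hni
    have : (n - i).choose i = 0 := Nat.choose_eq_zero_of_lt (by omega)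
    simp [this]
  -- second piece
  have h2 : y * Useq y (n - 1)
      = ∑ i ∈ Finset.range (M + 1), (if i = 0 then (0:R) else (Nat.choose (n - 1 - i) (i - 1) : R)) * y ^ i := by
    rw [Finset.sum_range_succ' (fun i => (if i = 0 then (0:R) else (Nat.choose (n - 1 - i) (i - 1) : R)) * y ^ i) M]
    simp only [Nat.add_eq_zero, Nat.succ_ne_zero, and_false, if_false, ite_true, if_pos,
      zero_mul, add_zero, Nat.add_sub_cancel, one_ne_zero]
    rw [Useq, Finset.mul_sum]
    have hsub : Finset.range M ⊆ Finset.range (n - 1) := by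
      apply Finset.range_subset_range.2; omega
    rw [← Finset.sum_subset hsub]
    · refine Finset.sum_congr rfl fun i hi => ?_
      have : n - 1 - 1 - i = n - 1 - (i + 1) := by omega
      rw [this]; ring
    · intro i hi hni
      rw [Finset.mem_range] at hi hni
      have : (n - 1 - 1 - i).choose i = 0 := Nat.choose_eq_zero_of_lt (by omega)
      simp [this]
  rw [h1, h2, ← Finset.sum_add_distrib]
  refine Finset.sum_congr rfl fun i hi => ?_
  rw [Acoef]
  push_cast
  split_ifs <;> push_cast <;> ring

/-- The rational Dickson coefficient equals the natural number `Acoef`. -/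
lemma term_eq_Acoef (n i : ℕ) (hi : i < n) :
    ((n : ℚ)) / (((n - i : ℕ) : ℚ)) * (Nat.choose (n - i) i : ℚ) = (Acoef n i : ℚ) := by
  have hni : 0 < n - i := by omega
  have hne : (((n - i : ℕ)) : ℚ) ≠ 0 := by positivity
  rcases Nat.eq_zero_or_pos i with h0 | hpos
  · subst h0
    simp only [Acoef, if_pos rfl, ↓reduceIte, Nat.sub_zero, Nat.choose_zero_right, Nat.add_zero]
    have : (n : ℚ) ≠ 0 := by positivity
    field_simp
  · -- key natural number identity
    have hkey : (n - i) * Nat.choose (n - 1 - i) (i - 1) = Nat.choose (n - i) i * i := by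
      have := Nat.add_one_mul_choose_eq (n - i - 1) (i - 1)
      have e1 : Nat.succ (n - i - 1) = n - i := by omega
      have e2 : n - i - 1 + 1 = n - i := by omega
      have e3 : i - 1 + 1 = i := by omega
      rw [e2] at this
      have e4 : n - 1 - i = n - i - 1 := by omega
      rw [e4]
      rw [this]
      simp only [Nat.succ_eq_add_one, e3]
    have hN : n * Nat.choose (n - i) i = (n - i) * Acoef n i := by
      have hsplit : n = (n - i) + i := by omega
      calc n * Nat.choose (n - i) i
          = (n - i) * Nat.choose (n - i) i + i * Nat.choose (n - i) i := by
            rw [← Nat.add_mul, ← hsplit]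
        _ = (n - i) * Nat.choose (n - i) i + (n - i) * Nat.choose (n - 1 - i) (i - 1) := by
            rw [Nat.mul_comm i, ← hkey]
        _ = (n - i) * Acoef n i := by
            rw [Acoef, if_neg (by omega), Nat.mul_add]
    have hQ : (n : ℚ) * (Nat.choose (n - i) i : ℚ) = ((n - i : ℕ) : ℚ) * (Acoef n i : ℚ) := by
      exact_mod_cast congrArg (Nat.cast : ℕ → ℚ) hN
    rw [div_mul_eq_mul_div, hQ, mul_comm, mul_div_assoc, div_self hne, mul_one]

end DicksonAux
namespace DicksonAux

open Polynomial

/-- Evaluation of the coefficient generating sum at a point of `𝔽_q` is `2`. -/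
lemma inner_eval (p s : ℕ) [hp : Fact p.Prime] {L : Type*} [Field L] [IsAlgClosed L]
    [CharP L p] (hodd : Odd p) (hs : 0 < s) (c : L) (hc0 : c ≠ 0)
    (hcq : c ^ p ^ s = c) :
    ∑ i ∈ Finset.range (((p ^ s) ^ 2 - 1) / 2 + 1),
      (Acoef ((p ^ s) ^ 2 - 1) i : L) * c ^ i = 2 := by
  set q := p ^ s with hqdef
  have hq2 : 2 ≤ q := by
    calc 2 ≤ p := hp.out.two_le
    _ ≤ p ^ s := Nat.le_self_pow hs.ne' p
  have hqodd : Odd q := hodd.pow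
  set n := q ^ 2 - 1 with hndef
  have hn2 : 2 ≤ n := by
    have : 4 ≤ q ^ 2 := by nlinarith
    omega
  have heven : n % 2 = 0 := by
    have : q ^ 2 % 2 = 1 := Nat.odd_iff.1 (hqodd.pow)
    omega
  -- get a root of z² = z + c
  obtain ⟨α, hroot⟩ := IsAlgClosed.exists_root (X ^ 2 - X - C c)
    (by
      have hdeg : (X ^ 2 - X - C c : L[X]).degree = 2 := by
        compute_degree!
      rw [hdeg]; exact two_ne_zero)
  have hα : α ^ 2 = α + c := by
    have h := hroot
    simp only [IsRoot, eval_sub, eval_pow, eval_X, eval_C] at h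
    linear_combination h
  have hβ : (1 - α) ^ 2 = (1 - α) + c := by linear_combination hα
  -- Frobenius
  have hαq : α ^ q = α ∨ α ^ q = 1 - α := by
    have h1 : (α ^ q) ^ 2 = α ^ q + c := by
      calc (α ^ q) ^ 2 = (α ^ 2) ^ q := by rw [← pow_mul, ← pow_mul, mul_comm]
        _ = (α + c) ^ q := by rw [hα]
        _ = α ^ q + c ^ q := add_pow_char_pow α c s (p := p)
        _ = α ^ q + c := by rw [hcq]
    have h2 : (α ^ q - α) * (α ^ q - (1 - α)) = 0 := by linear_combination h1 - hα
    rcases mul_eq_zero.1 h2 with h | h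
    · exact Or.inl (sub_eq_zero.1 h)
    · exact Or.inr (sub_eq_zero.1 h)
  have hsub_pow : ∀ x y : L, (x - y) ^ q = x ^ q - y ^ q := fun x y =>
    sub_pow_char_pow x y s (p := p)
  have hαq2 : α ^ q ^ 2 = α := by
    have hpow : α ^ q ^ 2 = (α ^ q) ^ q := by rw [pow_two, pow_mul]
    rcases hαq with h | h
    · rw [hpow, h, h]
    · rw [hpow, h]
      have : (1 - α) ^ q = 1 ^ q - α ^ q := hsub_pow 1 α
      rw [this, one_pow, h]
      ring
  have hα0 : α ≠ 0 := by
    intro h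
    rw [h] at hα
    simp at hα
    exact hc0 hα.symm
  have hβ0 : (1 - α) ≠ 0 := by
    intro h
    have hα1 : α = 1 := by linear_combination -h
    rw [hα1] at hα
    simp at hα
    exact hc0 hα
  have hβq2 : (1 - α) ^ q ^ 2 = 1 - α := by
    have e : q ^ 2 = p ^ (s * 2) := by rw [hqdef, ← pow_mul]
    rw [e]
    have : (1 - α) ^ p ^ (s * 2) = 1 ^ p ^ (s * 2) - α ^ p ^ (s * 2) :=
      sub_pow_char_pow (1 : L) α (s * 2) (p := p)
    rw [this, one_pow, ← e, hαq2]
  have hαn : α ^ n = 1 := by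
    have he : n + 1 = q ^ 2 := by omega
    have h1 : α ^ n * α = 1 * α := by
      rw [one_mul, ← pow_succ, he, hαq2]
    exact mul_right_cancel₀ hα0 h1
  have hβn : (1 - α) ^ n = 1 := by
    have he : n + 1 = q ^ 2 := by omega
    have h1 : (1 - α) ^ n * (1 - α) = 1 * (1 - α) := by
      rw [one_mul, ← pow_succ, he, hβq2]
    exact mul_right_cancel₀ hβ0 h1
  -- combine with the generating identity
  rw [sum_Acoef_eq c n hn2 heven]
  have e1 : n - 1 + 1 = n := by omega
  have e2 : n - 1 + 2 = n + 1 := by omega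
  have hu1 : α ^ n = Useq c n * α + c * Useq c (n - 1) := by
    have h := Useq_pow c α hα (n - 1)
    rwa [e1] at h
  have hu2 : (1 - α) ^ n = Useq c n * (1 - α) + c * Useq c (n - 1) := by
    have h := Useq_pow c (1 - α) hβ (n - 1)
    rwa [e1] at h
  have hrec : Useq c (n + 1) = Useq c n + c * Useq c (n - 1) := by
    have h := Useq_rec c (n - 1)
    rwa [e2, e1] at h
  rw [hrec]
  linear_combination -hu1 - hu2 + hαn + hβn

end DicksonAux
namespace DicksonAux

/-- Column sums of `Acoef` are divisible by `p`. -/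
lemma key (p s : ℕ) [hp : Fact p.Prime] (hodd : Odd p) (hs : 0 < s) (k : ℕ)
    (hk : k ≤ p ^ s - 2) :
    p ∣ ∑ j ∈ Finset.range ((p ^ s - 1) / 2 + 1),
        Acoef ((p ^ s) ^ 2 - 1) (j * (p ^ s - 1) + k) := by
  classical
  set q := p ^ s with hqdef
  have hp2 : p ≠ 2 := by rintro rfl; exact (by decide : ¬ Odd 2) hodd
  have hp3 : 3 ≤ p := by have := hp.out.two_le; omega
  have hq3 : 3 ≤ q := le_trans hp3 (Nat.le_self_pow hs.ne' p)
  have hqodd : Odd q := hodd.pow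
  obtain ⟨u, hu⟩ := hqodd
  have hu1 : 1 ≤ u := by omega
  set m := (q - 1) / 2 with hmdef
  set n := q ^ 2 - 1 with hndef
  set M := n / 2 with hMdef
  have hqq : q ^ 2 = q * q := sq q
  have hn4 : n = 4 * (u * u) + 4 * u := by
    have h : q * q = 4 * (u * u) + 4 * u + 1 := by rw [hu]; ring
    omega
  have hm : m = u := by omega
  have hM : M = 2 * (u * u) + 2 * u := by omega
  have hd : q - 1 = 2 * u := by omega
  have hmul1 : (m + 1) * (q - 1) = 2 * (u * u) + 2 * u := by rw [hm, hd]; ring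
  have hmul0 : m * (q - 1) = 2 * (u * u) := by rw [hm, hd]; ring
  have hmul2 : (m + 2) * (q - 1) = 2 * (u * u) + 4 * u := by rw [hm, hd]; ring
  -- the finite field
  set F := GaloisField p s with hF
  letI : Fintype F := Fintype.ofFinite F
  have hcard : Fintype.card F = q := by
    rw [← Nat.card_eq_fintype_card, GaloisField.card p s hs.ne']
  set L := AlgebraicClosure F with hL
  haveI : CharP L p := charP_of_injective_algebraMap (algebraMap F L).injective p
  rw [← CharP.cast_eq_zero_iff L p, Nat.cast_sum]
  set e := algebraMap F L with he
  -- inner evaluation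
  have hinner : ∀ t : Fˣ,
      ∑ i ∈ Finset.range (M + 1), (Acoef n i : L) * (e (t : F)) ^ i = 2 := by
    intro t
    have hc0 : e (t : F) ≠ 0 := by
      have := Units.ne_zero t
      simpa [map_eq_zero_iff e (RingHom.injective e)] using this
    have hcq : (e (t : F)) ^ q = e (t : F) := by
      rw [← map_pow]
      congr 1
      have := FiniteField.pow_card (t : F)
      rwa [hcard] at this
    exact inner_eval p s hodd hs (e (t : F)) hc0 hcq
  -- power sums over units
  have hpowsum : ∀ d : ℕ,
      (∑ t : Fˣ, (e (t : F)) ^ d) = if (q - 1) ∣ d then (-1 : L) else 0 := by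
    intro d
    have hsum := FiniteField.sum_pow_units F d
    rw [hcard] at hsum
    have h1 : (∑ t : Fˣ, (e (t : F)) ^ d) = e (∑ t : Fˣ, ((t : F)) ^ d) := by
      rw [map_sum]
      exact Finset.sum_congr rfl fun t _ => (map_pow e _ d).symm
    have h2 : (∑ t : Fˣ, ((t : F)) ^ d) = if (q - 1) ∣ d then (-1 : F) else 0 := by
      rw [← hsum]
    rw [h1, h2]
    split_ifs <;> simp
  -- the double sum, two ways
  have main : ∑ i ∈ Finset.range (M + 1),
        (Acoef n i : L) * (if (q - 1) ∣ (q - 1 - k + i) then (-1 : L) else 0)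
      = 2 * (if (q - 1) ∣ (q - 1 - k) then (-1 : L) else 0) := by
    calc ∑ i ∈ Finset.range (M + 1),
          (Acoef n i : L) * (if (q - 1) ∣ (q - 1 - k + i) then (-1 : L) else 0)
        = ∑ i ∈ Finset.range (M + 1),
            (Acoef n i : L) * ∑ t : Fˣ, (e (t : F)) ^ (q - 1 - k + i) := by
          exact Finset.sum_congr rfl fun i _ => by rw [hpowsum]
      _ = ∑ i ∈ Finset.range (M + 1), ∑ t : Fˣ,
            (e (t : F)) ^ (q - 1 - k) * ((Acoef n i : L) * (e (t : F)) ^ i) := by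
          refine Finset.sum_congr rfl fun i _ => ?_
          rw [Finset.mul_sum]
          exact Finset.sum_congr rfl fun t _ => by rw [pow_add]; ring
      _ = ∑ t : Fˣ, ∑ i ∈ Finset.range (M + 1),
            (e (t : F)) ^ (q - 1 - k) * ((Acoef n i : L) * (e (t : F)) ^ i) :=
          Finset.sum_comm
      _ = ∑ t : Fˣ, (e (t : F)) ^ (q - 1 - k) * 2 := by
          refine Finset.sum_congr rfl fun t _ => ?_
          rw [← Finset.mul_sum, hinner t]
      _ = 2 * ∑ t : Fˣ, (e (t : F)) ^ (q - 1 - k) := by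
          rw [Finset.mul_sum]
          exact Finset.sum_congr rfl fun t _ => by ring
      _ = 2 * (if (q - 1) ∣ (q - 1 - k) then (-1 : L) else 0) := by rw [hpowsum]
  -- rewrite the LHS of `main` as a sum over the arithmetic progression
  set J : ℕ := if k = 0 then m + 1 else m with hJ
  have himg : (Finset.range (M + 1)).filter (fun i => (q - 1) ∣ (q - 1 - k + i))
      = Finset.image (fun j => j * (q - 1) + k) (Finset.range (J + 1)) := by
    ext i
    simp only [Finset.mem_filter, Finset.mem_range, Finset.mem_image]
    constructor
    · rintro ⟨hiM, c, hc⟩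
      rcases c with _ | c'
      · simp only [Nat.mul_zero] at hc; omega
      · have hcc : q - 1 - k + i = c' * (q - 1) + (q - 1) := by rw [hc]; ring
        refine ⟨c', ?_, by omega⟩
        by_contra hcon
        push_neg at hcon
        rcases Nat.eq_zero_or_pos k with hk0 | hkpos
        · have hJm : J = m + 1 := by rw [hJ, if_pos hk0]
          have hge : (m + 2) * (q - 1) ≤ c' * (q - 1) :=
            Nat.mul_le_mul_right _ (by omega)
          omega
        · have hJm : J = m := by rw [hJ, if_neg (by omega)]
          have hge : (m + 1) * (q - 1) ≤ c' * (q - 1) :=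
            Nat.mul_le_mul_right _ (by omega)
          omega
    · rintro ⟨j, hj, rfl⟩
      have hdvd : (q - 1) ∣ (q - 1 - k + (j * (q - 1) + k)) := by
        refine ⟨j + 1, ?_⟩
        have h7 : q - 1 - k + (j * (q - 1) + k) = j * (q - 1) + (q - 1) := by omega
        rw [h7]; ring
      refine ⟨?_, hdvd⟩
      rcases Nat.eq_zero_or_pos k with hk0 | hkpos
      · have hJm : J = m + 1 := by rw [hJ, if_pos hk0]
        have hle : j * (q - 1) ≤ (m + 1) * (q - 1) :=
          Nat.mul_le_mul_right _ (by omega)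
        omega
      · have hJm : J = m := by rw [hJ, if_neg (by omega)]
        have hle : j * (q - 1) ≤ m * (q - 1) :=
          Nat.mul_le_mul_right _ (by omega)
        omega
  have hfilter : ∑ i ∈ Finset.range (M + 1),
        (Acoef n i : L) * (if (q - 1) ∣ (q - 1 - k + i) then (-1 : L) else 0)
      = - ∑ j ∈ Finset.range (J + 1), (Acoef n (j * (q - 1) + k) : L) := by
    have h8 : ∀ i ∈ Finset.range (M + 1),
        (Acoef n i : L) * (if (q - 1) ∣ (q - 1 - k + i) then (-1 : L) else 0)
          = if (q - 1) ∣ (q - 1 - k + i) then -(Acoef n i : L) else 0 := by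
      intro i _
      split_ifs <;> ring
    rw [Finset.sum_congr rfl h8, ← Finset.sum_filter, himg, Finset.sum_image, ← Finset.sum_neg_distrib]
    intro j1 _ j2 _ hj
    have h9 : j1 * (q - 1) = j2 * (q - 1) := by simp only at hj; omega
    exact Nat.eq_of_mul_eq_mul_right (by omega) h9
  rw [hfilter] at main
  -- conclude
  rcases Nat.eq_zero_or_pos k with hk0 | hkpos
  · subst hk0
    rw [if_pos (by simp)] at main
    rw [hJ, if_pos rfl] at main
    rw [Finset.sum_range_succ] at main
    have hAM : Acoef n ((m + 1) * (q - 1) + 0) = 2 := by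
      have hiM : (m + 1) * (q - 1) + 0 = M := by omega
      rw [hiM, Acoef, if_neg (by omega)]
      have e1 : n - M = M := by omega
      have e2 : n - 1 - M = M - 1 := by omega
      rw [e1, e2, Nat.choose_self, Nat.choose_self]
    rw [hAM] at main
    push_cast at main ⊢
    linear_combination -main
  · rw [if_neg ?hne] at main
    case hne =>
      intro hdvd
      have := Nat.eq_zero_of_dvd_of_lt hdvd (by omega)
      omega
    rw [hJ, if_neg (by omega)] at main
    push_cast at main ⊢
    linear_combination -main

end DicksonAux
/-- Column sums of the Dickson coefficient table vanish mod `p`: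
for each `0 ≤ k ≤ q - 2`,
`∑_j (q²-1)/(q²-1-(j(q-1)+k)) * C(q²-1-(j(q-1)+k), j(q-1)+k) ≡ 0 (mod p)`,
where `j` ranges over `0 ≤ j ≤ (q-1)/2` (the index `(j,k) = ((q+1)/2, 0)` of the
constant term is excluded). -/
theorem dickson_coeff_column_sum (p s q : ℕ) [Fact p.Prime] (hodd : Odd p)
    (hs : 0 < s) (hq : q = p ^ s) (k : ℕ) (hk : k ≤ q - 2) :
    ((∑ j ∈ Finset.range ((q - 1) / 2 + 1),
        ((q ^ 2 - 1 : ℕ) : ℚ) / (((q ^ 2 - 1) - (j * (q - 1) + k) : ℕ) : ℚ) *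
          (Nat.choose ((q ^ 2 - 1) - (j * (q - 1) + k)) (j * (q - 1) + k) : ℚ) : ℚ) :
      ZMod p) = 0 := by
  have hp : Fact p.Prime := inferInstance
  have hp2 : p ≠ 2 := by rintro rfl; exact (by decide : ¬ Odd 2) hodd
  have hp3 : 3 ≤ p := by have := hp.out.two_le; omega
  have hq3 : 3 ≤ q := hq ▸ le_trans hp3 (Nat.le_self_pow hs.ne' p)
  have hqodd : Odd q := hq ▸ hodd.pow
  obtain ⟨u, hu⟩ := hqodd
  have hu1 : 1 ≤ u := by omega
  have hqq : q ^ 2 = q * q := sq q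
  have hn4 : q ^ 2 - 1 = 4 * (u * u) + 4 * u := by
    have h : q * q = 4 * (u * u) + 4 * u + 1 := by rw [hu]; ring
    omega
  have hmul0 : ((q - 1) / 2) * (q - 1) = 2 * (u * u) := by
    have h1 : (q - 1) / 2 = u := by omega
    have h2 : q - 1 = 2 * u := by omega
    rw [h1, h2]; ring
  have hsum : (∑ j ∈ Finset.range ((q - 1) / 2 + 1),
        ((q ^ 2 - 1 : ℕ) : ℚ) / (((q ^ 2 - 1) - (j * (q - 1) + k) : ℕ) : ℚ) *
          (Nat.choose ((q ^ 2 - 1) - (j * (q - 1) + k)) (j * (q - 1) + k) : ℚ))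
      = ((∑ j ∈ Finset.range ((q - 1) / 2 + 1),
          DicksonAux.Acoef (q ^ 2 - 1) (j * (q - 1) + k) : ℕ) : ℚ) := by
    rw [Nat.cast_sum]
    refine Finset.sum_congr rfl fun j hj => ?_
    apply DicksonAux.term_eq_Acoef
    rw [Finset.mem_range] at hj
    have hle : j * (q - 1) ≤ ((q - 1) / 2) * (q - 1) :=
      Nat.mul_le_mul_right _ (by omega)
    omega
  rw [hsum, Rat.cast_natCast, ZMod.natCast_eq_zero_iff]
  subst hq
  exact DicksonAux.key p s hodd hs k hk
end
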